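/- arXiv:2103.02576 — 7 statements merged into one kernel-verified Lean document; each statement's English description precedes it below -/
import Mathlib

section
/- Fix an integer d ≥ 1, real numbers c_1 < c_2 < ⋯ < c_d < a_{d+1} < 0, and δ > 0. Then there exists ε₀ > 0 such that for all real parameters a_j, b_j with (a_j + b_j)/2 = c_j, b_j < a_j, and a_j − b_j ≤ ε₀ for all j (so that condition (★) holds), every z ∈ ℂ with Im z ≠ 0 and Im(N(z)·conj(D(z))) = 0 satisfies |z − c_j| < δ for some 1 ≤ j ≤ d; that is, the non-real part of the preimage γ̃^{−1}(ℝP¹) is contained in the union of the discs of radius δ centered at the points c_j. -/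
open scoped BigOperators
open Complex

/-- `p(z) = (z - a_{d+1}) · ∏_{j=1}^{d} (z - a_j)` as a function on `ℂ`,
where `A` plays the role of `a_{d+1}`. -/
noncomputable def pC (d : ℕ) (A : ℝ) (a : Fin d → ℝ) : ℂ → ℂ :=
  fun z => (z - (A : ℂ)) * ∏ j, (z - (a j : ℂ))

/-- `q(z) = ∏_{j=1}^{d} (z - b_j)` as a function on `ℂ`. -/
noncomputable def qC (d : ℕ) (b : Fin d → ℝ) : ℂ → ℂ :=
  fun z => ∏ j, (z - (b j : ℂ))

/-- The numerator `N(z) = z (q'(z) p(z) - p'(z) q(z))` of `γ̃`. -/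
noncomputable def NC (d : ℕ) (A : ℝ) (a b : Fin d → ℝ) : ℂ → ℂ :=
  fun z => z * (deriv (qC d b) z * pC d A a z - deriv (pC d A a) z * qC d b z)

/-- The denominator `D(z) = p(z) q(z)` of `γ̃`. -/
noncomputable def DC (d : ℕ) (A : ℝ) (a b : Fin d → ℝ) : ℂ → ℂ :=
  fun z => pC d A a z * qC d b z

/-!
For non-real `z`, `N = D · z (log q − log p)'` and `Im (z / (z − w)) = −w · Im z / |z − w|²` give
`Im (N · conj D) = |D|² · Im z · F(z)` with
`F(z) = Σⱼ (aⱼ / |z − aⱼ|² − bⱼ / |z − bⱼ|²) + a_{d+1} / |z − a_{d+1}|²`.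
A pair term equals `(aⱼ − bⱼ)(|z|² − aⱼbⱼ) / (|z − aⱼ|² |z − bⱼ|²)`, so when `z` stays `δ` away
from every `cⱼ` it is at most `(aⱼ − bⱼ) K / |z − a_{d+1}|²`, where `K` depends only on `δ` and
a bound for `|cⱼ|` and `|a_{d+1}|`. The last term is `a_{d+1} / |z − a_{d+1}|² < 0`, so
`F(z) < 0` as soon as `d ε K < −a_{d+1}`.
-/

open ComplexConjugate

lemma sub_ofReal_ne_zero {z : ℂ} (hz : z.im ≠ 0) (w : ℝ) : z - w ≠ 0 := by
  intro h
  exact hz (by simpa using congrArg im h)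

lemma logDeriv_sub_const (z v : ℂ) : logDeriv (fun w => w - v) z = (z - v)⁻¹ := by
  rw [logDeriv_apply, deriv_sub_const, deriv_id'', one_div]

lemma logDeriv_prod_sub {ι : Type*} (s : Finset ι) (v : ι → ℂ) {z : ℂ}
    (hz : ∀ j ∈ s, z - v j ≠ 0) :
    logDeriv (fun w => ∏ j ∈ s, (w - v j)) z = ∑ j ∈ s, (z - v j)⁻¹ := by
  rw [logDeriv_prod hz fun j _ => (differentiableAt_id.sub_const _)]
  simp only [logDeriv_sub_const]

lemma deriv_mul_sub_mul_deriv_eq {f g : ℂ → ℂ} {z : ℂ} (hf : f z ≠ 0) (hg : g z ≠ 0) :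
    deriv g z * f z - deriv f z * g z = f z * g z * (logDeriv g z - logDeriv f z) := by
  rw [logDeriv_apply, logDeriv_apply]
  field_simp

lemma im_mul_inv_sub_ofReal (z : ℂ) (w : ℝ) :
    (z * (z - w)⁻¹).im = -(z.im * (w / ‖z - w‖ ^ 2)) := by
  rw [← div_eq_mul_inv, div_im, Complex.sq_norm]
  simp only [sub_re, ofReal_re, sub_im, ofReal_im, sub_zero]
  ring

/-- The function `F` with `Im γ̃(z) = Im z · F(z)` for non-real `z`. -/
noncomputable def gaussWeight (d : ℕ) (A : ℝ) (a b : Fin d → ℝ) (z : ℂ) : ℝ :=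
  ∑ j, (a j / ‖z - a j‖ ^ 2 - b j / ‖z - b j‖ ^ 2) + A / ‖z - A‖ ^ 2

lemma logDeriv_qC {d : ℕ} (b : Fin d → ℝ) {z : ℂ} (hz : z.im ≠ 0) :
    logDeriv (qC d b) z = ∑ j, (z - b j)⁻¹ :=
  logDeriv_prod_sub _ (fun j => (b j : ℂ)) fun j _ => sub_ofReal_ne_zero hz (b j)

lemma logDeriv_pC {d : ℕ} (A : ℝ) (a : Fin d → ℝ) {z : ℂ} (hz : z.im ≠ 0) :
    logDeriv (pC d A a) z = (z - A)⁻¹ + ∑ j, (z - a j)⁻¹ := by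
  have hprod := fun j (_ : j ∈ Finset.univ) => sub_ofReal_ne_zero hz (a j)
  unfold pC
  rw [logDeriv_mul (f := fun w => w - (A : ℂ)) (g := fun w => ∏ j, (w - (a j : ℂ))) z
    (sub_ofReal_ne_zero hz A) (Finset.prod_ne_zero_iff.2 hprod) (differentiableAt_id.sub_const _)
    (DifferentiableAt.fun_finsetProd fun j _ => differentiableAt_id.sub_const _),
    logDeriv_sub_const, logDeriv_prod_sub _ (fun j => (a j : ℂ)) hprod]

lemma pC_ne_zero {d : ℕ} (A : ℝ) (a : Fin d → ℝ) {z : ℂ} (hz : z.im ≠ 0) : pC d A a z ≠ 0 :=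
  mul_ne_zero (sub_ofReal_ne_zero hz A)
    (Finset.prod_ne_zero_iff.2 fun j _ => sub_ofReal_ne_zero hz (a j))

lemma qC_ne_zero {d : ℕ} (b : Fin d → ℝ) {z : ℂ} (hz : z.im ≠ 0) : qC d b z ≠ 0 :=
  Finset.prod_ne_zero_iff.2 fun j _ => sub_ofReal_ne_zero hz (b j)

theorem im_NC_mul_conj_DC {d : ℕ} (A : ℝ) (a b : Fin d → ℝ) {z : ℂ} (hz : z.im ≠ 0) :
    (NC d A a b z * conj (DC d A a b z)).im = normSq (DC d A a b z) * z.im *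
      gaussWeight d A a b z := by
  have hN : NC d A a b z = DC d A a b z * (z * (logDeriv (qC d b) z - logDeriv (pC d A a) z)) := by
    rw [NC, DC, deriv_mul_sub_mul_deriv_eq (pC_ne_zero A a hz) (qC_ne_zero b hz)]
    ring
  rw [hN, mul_right_comm, mul_conj, im_ofReal_mul, logDeriv_qC b hz, logDeriv_pC A a hz]
  simp only [mul_sub, mul_add, Finset.mul_sum (s := Finset.univ) (a := z), sub_im, add_im, im_sum,
    im_mul_inv_sub_ofReal]
  simp only [Finset.sum_neg_distrib, ← Finset.mul_sum, gaussWeight, Finset.sum_sub_distrib]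
  ring

lemma norm_sub_ofReal_sub_abs_le (z : ℂ) (c w : ℝ) : ‖z - c‖ - |w - c| ≤ ‖z - w‖ := by
  have h := norm_sub_norm_le (z - c) (z - w)
  rw [sub_sub_sub_cancel_left, ← ofReal_sub, norm_real, Real.norm_eq_abs] at h
  linarith

lemma norm_sub_ofReal_le_add_abs (z : ℂ) (c w : ℝ) : ‖z - w‖ ≤ ‖z - c‖ + |c - w| := by
  have h := norm_sub_le_norm_sub_add_norm_sub z (c : ℂ) (w : ℂ)
  rwa [← ofReal_sub, norm_real, Real.norm_eq_abs] at h

lemma div_sq_norm_sub_sub_div_sq_norm_sub (z : ℂ) {a b : ℝ} (ha : z - a ≠ 0) (hb : z - b ≠ 0) :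
    a / ‖z - a‖ ^ 2 - b / ‖z - b‖ ^ 2
      = (a - b) * (‖z‖ ^ 2 - a * b) / (‖z - a‖ ^ 2 * ‖z - b‖ ^ 2) := by
  have ha' : normSq (z - a) ≠ 0 := by simpa using ha
  have hb' : normSq (z - b) ≠ 0 := by simpa using hb
  simp only [Complex.sq_norm] at *
  field_simp
  simp only [normSq_apply, sub_re, ofReal_re, sub_im, ofReal_im, sub_zero]
  ring

lemma div_sq_norm_sub_sub_div_sq_norm_sub_le {z : ℂ} {a b c M δ : ℝ} (hδ : 0 < δ) (hc : |c| ≤ M)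
    (hmid : (a + b) / 2 = c) (hba : b ≤ a) (habδ : a - b ≤ δ) (hzc : δ ≤ ‖z - c‖) :
    a / ‖z - a‖ ^ 2 - b / ‖z - b‖ ^ 2 ≤ (a - b) * (32 * (1 + M / δ) ^ 2) / ‖z - c‖ ^ 2 := by
  set t := ‖z - c‖
  set μ := 1 + M / δ
  have ht : 0 < t := hδ.trans_le hzc
  have hM : 0 ≤ M := (abs_nonneg c).trans hc
  have hμ : 1 ≤ μ := le_add_of_nonneg_right (by positivity)
  have hMt : M ≤ M / δ * t := by
    rw [div_mul_eq_mul_div, le_div_iff₀ hδ]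
    exact mul_le_mul_of_nonneg_left hzc hM
  have hza : t / 2 ≤ ‖z - a‖ := by
    have := norm_sub_ofReal_sub_abs_le z c a
    rw [abs_of_nonneg (by linarith)] at this
    linarith
  have hzb : t / 2 ≤ ‖z - b‖ := by
    have := norm_sub_ofReal_sub_abs_le z c b
    rw [abs_of_nonpos (by linarith)] at this
    linarith
  have hz : ‖z‖ ≤ μ * t := by
    have := norm_sub_ofReal_le_add_abs z c 0
    simp only [ofReal_zero, sub_zero] at this
    linarith
  have hnum : ‖z‖ ^ 2 - a * b ≤ 2 * μ ^ 2 * t ^ 2 := by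
    have hab : a * b = c ^ 2 - ((a - b) / 2) ^ 2 := by rw [← hmid]; ring
    have hz2 : ‖z‖ ^ 2 ≤ (μ * t) ^ 2 := pow_le_pow_left₀ (norm_nonneg z) hz 2
    nlinarith
  have hden : t ^ 4 / 16 ≤ ‖z - a‖ ^ 2 * ‖z - b‖ ^ 2 := by
    have h1 : (t / 2) ^ 2 ≤ ‖z - a‖ ^ 2 := pow_le_pow_left₀ (by positivity) hza 2
    have h2 : (t / 2) ^ 2 ≤ ‖z - b‖ ^ 2 := pow_le_pow_left₀ (by positivity) hzb 2
    calc t ^ 4 / 16 = (t / 2) ^ 2 * (t / 2) ^ 2 := by ring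
      _ ≤ _ := mul_le_mul h1 h2 (by positivity) (by positivity)
  have hza0 : z - a ≠ 0 := norm_pos_iff.mp ((half_pos ht).trans_le hza)
  have hzb0 : z - b ≠ 0 := norm_pos_iff.mp ((half_pos ht).trans_le hzb)
  rw [div_sq_norm_sub_sub_div_sq_norm_sub z hza0 hzb0, mul_div_assoc, mul_div_assoc]
  refine mul_le_mul_of_nonneg_left ?_ (sub_nonneg.mpr hba)
  calc (‖z‖ ^ 2 - a * b) / (‖z - a‖ ^ 2 * ‖z - b‖ ^ 2)
      ≤ 2 * μ ^ 2 * t ^ 2 / (‖z - a‖ ^ 2 * ‖z - b‖ ^ 2) :=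
        div_le_div_of_nonneg_right hnum (by positivity)
    _ ≤ 2 * μ ^ 2 * t ^ 2 / (t ^ 4 / 16) :=
        div_le_div_of_nonneg_left (by positivity) (by positivity) hden
    _ = 32 * μ ^ 2 / t ^ 2 := by field_simp; ring

lemma sq_norm_sub_ofReal_le {z : ℂ} {c w M δ : ℝ} (hδ : 0 < δ) (hc : |c| ≤ M) (hw : |w| ≤ M)
    (hzc : δ ≤ ‖z - c‖) : ‖z - w‖ ^ 2 ≤ 4 * (1 + M / δ) ^ 2 * ‖z - c‖ ^ 2 := by
  have hM : 0 ≤ M := (abs_nonneg c).trans hc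
  have hMt : M ≤ M / δ * ‖z - c‖ := by
    rw [div_mul_eq_mul_div, le_div_iff₀ hδ]
    exact mul_le_mul_of_nonneg_left hzc hM
  have hcw : |c - w| ≤ 2 * M := (abs_sub c w).trans (by linarith)
  have h : ‖z - w‖ ≤ 2 * (1 + M / δ) * ‖z - c‖ := by
    have := norm_sub_ofReal_le_add_abs z c w
    nlinarith [norm_nonneg (z - c)]
  calc ‖z - w‖ ^ 2 ≤ (2 * (1 + M / δ) * ‖z - c‖) ^ 2 := pow_le_pow_left₀ (norm_nonneg _) h 2
    _ = _ := by ring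

lemma gaussWeight_neg {d : ℕ} {A M δ ε : ℝ} {a b c : Fin d → ℝ}
    {z : ℂ} (hAM : |A| ≤ M) (hcM : ∀ j, |c j| ≤ M) (hδ : 0 < δ)
    (hmid : ∀ j, (a j + b j) / 2 = c j) (hba : ∀ j, b j ≤ a j) (habε : ∀ j, a j - b j ≤ ε)
    (hεδ : ε ≤ δ) (hε : d * ε * (128 * (1 + M / δ) ^ 4) < -A) (hzA : z - A ≠ 0)
    (hfar : ∀ j, δ ≤ ‖z - c j‖) :
    gaussWeight d A a b z < 0 := by
  set R := ‖z - A‖ ^ 2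
  have hR : 0 < R := by positivity
  have hterm : ∀ j,
      a j / ‖z - a j‖ ^ 2 - b j / ‖z - b j‖ ^ 2 ≤ ε * (128 * (1 + M / δ) ^ 4) / R := by
    intro j
    have hε0 : 0 ≤ ε := (sub_nonneg.2 (hba j)).trans (habε j)
    have ht : 0 < ‖z - c j‖ := hδ.trans_le (hfar j)
    have hRt := sq_norm_sub_ofReal_le hδ (hcM j) hAM (hfar j)
    calc _ ≤ (a j - b j) * (32 * (1 + M / δ) ^ 2) / ‖z - c j‖ ^ 2 :=
          div_sq_norm_sub_sub_div_sq_norm_sub_le hδ (hcM j) (hmid j) (hba j)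
            ((habε j).trans hεδ) (hfar j)
      _ ≤ ε * (32 * (1 + M / δ) ^ 2) / ‖z - c j‖ ^ 2 := by gcongr; exact habε j
      _ ≤ ε * (128 * (1 + M / δ) ^ 4) / R := by
        rw [div_le_div_iff₀ (by positivity) hR]
        calc ε * (32 * (1 + M / δ) ^ 2) * R
            ≤ ε * (32 * (1 + M / δ) ^ 2) * (4 * (1 + M / δ) ^ 2 * ‖z - c j‖ ^ 2) := by gcongr
          _ = _ := by ring
  calc gaussWeight d A a b z = ∑ j, (a j / ‖z - a j‖ ^ 2 - b j / ‖z - b j‖ ^ 2) + A / R := rfl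
    _ ≤ ∑ _j : Fin d, ε * (128 * (1 + M / δ) ^ 4) / R + A / R := by gcongr with j; exact hterm j
    _ = (d * ε * (128 * (1 + M / δ) ^ 4) + A) / R := by
        rw [Finset.sum_const, Finset.card_univ, Fintype.card_fin, nsmul_eq_mul]; ring
    _ < 0 := div_neg_of_neg_of_pos (by linarith) hR

lemma gaussWeight_eq_zero_of_im_eq_zero {d : ℕ} {A : ℝ} {a b : Fin d → ℝ} {z : ℂ}
    (hz : z.im ≠ 0) (h : (NC d A a b z * conj (DC d A a b z)).im = 0) :
    gaussWeight d A a b z = 0 := by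
  have hD : normSq (DC d A a b z) ≠ 0 :=
    normSq_eq_zero.not.mpr (mul_ne_zero (pC_ne_zero A a hz) (qC_ne_zero b hz))
  rw [im_NC_mul_conj_DC A a b hz] at h
  exact (mul_eq_zero.mp h).resolve_left (mul_ne_zero hD hz)

theorem stmt5_general (d : ℕ) (c : Fin d → ℝ) (A : ℝ)
    (hA : A < 0) (δ : ℝ) (hδ : 0 < δ) :
    ∃ ε₀ > (0 : ℝ), ∀ a b : Fin d → ℝ,
      (∀ j, (a j + b j) / 2 = c j) → (∀ j, b j < a j) → (∀ j, a j - b j ≤ ε₀) →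
      ∀ z : ℂ, z.im ≠ 0 → (NC d A a b z * (starRingEnd ℂ) (DC d A a b z)).im = 0 →
        ∃ j : Fin d, ‖z - (c j : ℂ)‖ < δ := by
  set M := |A| + ∑ j, |c j|
  set K := 128 * (1 + M / δ) ^ 4
  have hK : 0 < K := by positivity
  have hcM : ∀ j, |c j| ≤ M := fun j =>
    (Finset.single_le_sum (fun i _ => abs_nonneg (c i)) (Finset.mem_univ j)).trans
      (le_add_of_nonneg_left (abs_nonneg A))
  set ε₀ := min δ (-A / ((d + 1) * K))
  have hε₀ : 0 < ε₀ := lt_min hδ (div_pos (neg_pos.mpr hA) (by positivity))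
  have hdε₀ : d * ε₀ * K < -A := by
    have h : ε₀ * ((d + 1) * K) ≤ -A := (le_div_iff₀ (by positivity)).mp (min_le_right _ _)
    nlinarith [mul_pos hε₀ hK]
  refine ⟨ε₀, hε₀, ?_⟩
  intro a b hmid hba habε z hz hIm
  by_contra! hfar
  have hAM : |A| ≤ M := le_add_of_nonneg_right (Finset.sum_nonneg fun j _ => abs_nonneg (c j))
  have := gaussWeight_neg hAM hcM hδ hmid (fun j => (hba j).le) habε
    (min_le_left _ _) hdε₀ (sub_ofReal_ne_zero hz A) hfar
  linarith [gaussWeight_eq_zero_of_im_eq_zero hz hIm]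

theorem stmt5 (d : ℕ) (hd : 1 ≤ d) (c : Fin d → ℝ) (A : ℝ)
    (hc : StrictMono c) (hcA : ∀ j, c j < A) (hA : A < 0) (δ : ℝ) (hδ : 0 < δ) :
    ∃ ε₀ > (0 : ℝ), ∀ a b : Fin d → ℝ,
      (∀ j, (a j + b j) / 2 = c j) → (∀ j, b j < a j) → (∀ j, a j - b j ≤ ε₀) →
      ∀ z : ℂ, z.im ≠ 0 → (NC d A a b z * (starRingEnd ℂ) (DC d A a b z)).im = 0 →
        ∃ j : Fin d, ‖z - (c j : ℂ)‖ < δ :=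
  stmt5_general d c A hA δ hδ
end

section
/- Fix an integer d ≥ 1 and real parameters b_1 < a_1 < b_2 < a_2 < ⋯ < b_d < a_d < a_{d+1} < 0 (condition (★)). Then there exists λ₀ > 0 such that for every real λ with |λ| ≤ λ₀, the set S_h = {∞} ∪ {z ∈ ℂ : Im(N_h(z)·conj(D_h(z))) = 0} ⊆ OnePoint ℂ is connected; equivalently, the Log-critical locus of the curve {h = 0} is connected. -/
/-!
The roots of `q_λ` and `p_λ` are `c_k = r_k - λi` with `r_k = -b_k` (weight `σ_k = 1`) and
`r_k ∈ {a_1, …, a_{d+1}}` (weight `σ_k = -1`). Since `Im (z · conj (z - c_k))` equals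
`-(r_k v + λ (x - r_k))` for `z = x + (v - λ)i`, one finds `Im (N_h · conj D_h) = -g_λ(x, v)` with
`g_λ(x, v) = ∑_k σ_k (r_k v + λ (x - r_k)) ∏_{l ≠ k} |z - c_l|²`.
Condition (★) makes the `r_k` distinct and `σ_k r_k > 0`. Hence `g_λ(x, ·)` is negative near `-∞`
and positive near `+∞`, and once `(2d + 1) |λ| < min σ_k r_k` its `v`-derivative is positive, since
`|x - r_k| · |∂_v ∏_{l ≠ k} |z - c_l|²| ≤ ∑_l ∏_{j ≠ l} |z - c_j|²`. So `S_h ∩ ℂ` is the graph of a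
continuous function of `x`: it is connected, and its closure in `OnePoint ℂ` contains `∞`.
-/

open scoped BigOperators
open Complex

/-- `p_λ(z) = (z - (a_{d+1} - λi)) · ∏_{j=1}^{d} (z - (a_j - λi))`,
where `A` plays the role of `a_{d+1}`. -/
noncomputable def pLam (d : ℕ) (A : ℝ) (a : Fin d → ℝ) (lam : ℝ) : ℂ → ℂ :=
  fun z => (z - ((A : ℂ) - (lam : ℂ) * Complex.I)) *
    ∏ j, (z - ((a j : ℂ) - (lam : ℂ) * Complex.I))

/-- `q_λ(z) = ∏_{j=1}^{d} (z - (-b_j - λi))`. -/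
noncomputable def qLam (d : ℕ) (b : Fin d → ℝ) (lam : ℝ) : ℂ → ℂ :=
  fun z => ∏ j, (z - (-(b j : ℂ) - (lam : ℂ) * Complex.I))

/-- The numerator `N_h(z) = z (q_λ'(z) p_λ(z) - p_λ'(z) q_λ(z))` of `γ̃_h`. -/
noncomputable def Nh (d : ℕ) (A : ℝ) (a b : Fin d → ℝ) (lam : ℝ) : ℂ → ℂ :=
  fun z => z * (deriv (qLam d b lam) z * pLam d A a lam z -
    deriv (pLam d A a lam) z * qLam d b lam z)

/-- The denominator `D_h(z) = p_λ(z) q_λ(z)` of `γ̃_h`. -/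
noncomputable def Dh (d : ℕ) (A : ℝ) (a b : Fin d → ℝ) (lam : ℝ) : ℂ → ℂ :=
  fun z => pLam d A a lam z * qLam d b lam z

open Filter Topology Finset ComplexConjugate

theorem continuous_of_strictMono_of_apply_eq {X V β : Type*} [TopologicalSpace X]
    [LinearOrder V] [TopologicalSpace V] [OrderTopology V]
    [LinearOrder β] [TopologicalSpace β] [OrderClosedTopology β]
    {g : X → V → β} {c : β} (hmono : ∀ x, StrictMono (g x)) (hcont : ∀ v, Continuous (g · v))
    {φ : X → V} (hφ : ∀ x, g x (φ x) = c) : Continuous φ := by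
  refine continuous_iff_continuousAt.2 fun x₀ => tendsto_order.2 ⟨fun w hw => ?_, fun w hw => ?_⟩
  · have hlt : g x₀ w < c := hφ x₀ ▸ hmono x₀ hw
    filter_upwards [(hcont w).continuousAt.eventually_lt continuousAt_const hlt] with x hx
    exact (hmono x).lt_iff_lt.1 (by rwa [hφ x])
  · have hlt : c < g x₀ w := hφ x₀ ▸ hmono x₀ hw
    filter_upwards [continuousAt_const.eventually_lt (hcont w).continuousAt hlt] with x hx
    exact (hmono x).lt_iff_lt.1 (by rwa [hφ x])

theorem OnePoint.isConnected_singleton_infty_union_range {X Y : Type*} [TopologicalSpace X]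
    [TopologicalSpace Y] [ConnectedSpace Y] {f : Y → X} (hf : Continuous f) {l : Filter Y}
    [l.NeBot] (hl : Tendsto f l (coclosedCompact X)) :
    IsConnected ({OnePoint.infty} ∪ ((↑) '' Set.range f) : Set (OnePoint X)) := by
  rw [← Set.range_comp]
  refine (isConnected_range (OnePoint.continuous_coe.comp hf)).subset_closure
    Set.subset_union_right (Set.union_subset ?_ subset_closure)
  exact Set.singleton_subset_iff.2 <| mem_closure_of_tendsto (OnePoint.tendsto_coe_infty.comp hl)
    (Eventually.of_forall fun y => Set.mem_range_self y)

theorem isConnected_singleton_infty_union_zeroSet {g : ℝ → ℝ → ℝ}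
    (hmono : ∀ x, StrictMono (g x)) (hcont : ∀ y, Continuous (g · y))
    (hzero : ∀ x, ∃ y, g x y = 0) :
    IsConnected ({OnePoint.infty} ∪ ((↑) '' {z : ℂ | g z.re z.im = 0}) : Set (OnePoint ℂ)) := by
  choose φ hφ using hzero
  have hφc : Continuous φ := continuous_of_strictMono_of_apply_eq hmono hcont hφ
  have hgraph : {z : ℂ | g z.re z.im = 0} = Set.range fun x : ℝ => (x + φ x * Complex.I : ℂ) := by
    ext z
    refine ⟨fun hz => ⟨z.re, ?_⟩, ?_⟩
    · simp only [← (hmono z.re).injective (hz.trans (hφ z.re).symm), Complex.re_add_im]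
    · rintro ⟨x, rfl⟩
      simpa using hφ x
  rw [hgraph]
  refine OnePoint.isConnected_singleton_infty_union_range (by fun_prop) (l := atTop) ?_
  rw [coclosedCompact_eq_cocompact, ← Metric.cobounded_eq_cocompact,
    ← tendsto_norm_atTop_iff_cobounded]
  refine tendsto_atTop_mono (fun x => ?_) tendsto_abs_atTop_atTop
  simpa using Complex.abs_re_le_norm (x + φ x * Complex.I)

section CritFun

variable {ι : Type*} (r σ : ι → ℝ)

def sqDist (k : ι) (x v : ℝ) : ℝ := (x - r k) ^ 2 + v ^ 2

variable [Fintype ι] [DecidableEq ι]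

def cofactor (k : ι) (x v : ℝ) : ℝ := ∏ l ∈ univ.erase k, sqDist r l x v

def cofactorDeriv (k : ι) (x v : ℝ) : ℝ :=
  ∑ l ∈ univ.erase k, (∏ j ∈ (univ.erase k).erase l, sqDist r j x v) * (2 * v)

/-- The `g_λ(x, v)` of the header: `sqDist r k x v = |z - c_k|²` for `z = x + (v - λ)i`. -/
def critFun (lam x v : ℝ) : ℝ :=
  ∑ k, σ k * (r k * v + lam * (x - r k)) * cofactor r k x v

variable {r σ}

omit [Fintype ι] [DecidableEq ι] in
lemma sqDist_nonneg (k : ι) (x v : ℝ) : 0 ≤ sqDist r k x v := by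
  unfold sqDist; positivity

lemma cofactor_nonneg (k : ι) (x v : ℝ) : 0 ≤ cofactor r k x v :=
  prod_nonneg fun l _ => sqDist_nonneg l x v

omit [Fintype ι] [DecidableEq ι] in
lemma sqDist_pos_of_ne (hr : Function.Injective r) {k l : ι} (hkl : k ≠ l) (x v : ℝ) :
    0 < sqDist r k x v ∨ 0 < sqDist r l x v := by
  by_contra! h
  have hk := le_antisymm h.1 (sqDist_nonneg k x v)
  have hl := le_antisymm h.2 (sqDist_nonneg l x v)
  unfold sqDist at hk hl
  have hxk : x - r k = 0 := pow_eq_zero_iff two_ne_zero |>.1 (by nlinarith [sq_nonneg v])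
  have hxl : x - r l = 0 := pow_eq_zero_iff two_ne_zero |>.1 (by nlinarith [sq_nonneg v])
  exact hkl (hr (by linarith))

lemma exists_cofactor_pos [Nonempty ι] (hr : Function.Injective r) (x v : ℝ) :
    ∃ k, 0 < cofactor r k x v := by
  by_cases h : ∀ k, 0 < sqDist r k x v
  · exact ⟨Classical.arbitrary ι, prod_pos fun l _ => h l⟩
  · obtain ⟨k, hk⟩ := not_forall.1 h
    refine ⟨k, prod_pos fun l hl => ?_⟩
    exact (sqDist_pos_of_ne hr (ne_of_mem_erase hl).symm x v).resolve_left hk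

lemma sum_mul_cofactor_pos [Nonempty ι] (hr : Function.Injective r) {c : ι → ℝ}
    (hc : ∀ k, 0 < c k) (x v : ℝ) : 0 < ∑ k, c k * cofactor r k x v := by
  obtain ⟨k, hk⟩ := exists_cofactor_pos hr x v
  exact sum_pos' (fun l _ => mul_nonneg (hc l).le (cofactor_nonneg l x v))
    ⟨k, mem_univ k, mul_pos (hc k) hk⟩

lemma sqDist_mul_prod_erase_erase {k l : ι} (hlk : l ≠ k) (x v : ℝ) :
    sqDist r k x v * ∏ j ∈ (univ.erase k).erase l, sqDist r j x v = cofactor r l x v := by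
  rw [erase_right_comm]
  exact mul_prod_erase (univ.erase l) (fun j => sqDist r j x v) (mem_erase.2 ⟨hlk.symm, mem_univ k⟩)

lemma hasDerivAt_cofactor (k : ι) (x v : ℝ) :
    HasDerivAt (cofactor r k x) (cofactorDeriv r k x v) v := by
  have hsq (l : ι) : HasDerivAt (sqDist r l x) (2 * v) v := by
    show HasDerivAt (fun v => (x - r l) ^ 2 + v ^ 2) (2 * v) v
    simpa using (hasDerivAt_pow 2 v).const_add ((x - r l) ^ 2)
  have h := HasDerivAt.fun_finsetProd (u := univ.erase k) fun l _ => hsq l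
  simp only [smul_eq_mul] at h
  exact h

lemma mul_cofactorDeriv_nonneg (k : ι) (x v : ℝ) : 0 ≤ v * cofactorDeriv r k x v := by
  rw [cofactorDeriv, mul_sum]
  refine sum_nonneg fun l _ => ?_
  have := prod_nonneg fun j (_ : j ∈ (univ.erase k).erase l) => sqDist_nonneg (r := r) j x v
  nlinarith [sq_nonneg v]

/-- Termwise, `2 |x - r k| |v| ≤ sqDist r k x v` turns the `l`-th term of `cofactorDeriv`
into `cofactor r l x v`. -/
lemma abs_sub_mul_abs_cofactorDeriv_le (k : ι) (x v : ℝ) :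
    |x - r k| * |cofactorDeriv r k x v| ≤ ∑ l, cofactor r l x v := by
  calc |x - r k| * |cofactorDeriv r k x v|
      ≤ ∑ l ∈ univ.erase k,
          |x - r k| * |(∏ j ∈ (univ.erase k).erase l, sqDist r j x v) * (2 * v)| := by
        rw [← mul_sum]; exact mul_le_mul_of_nonneg_left (abs_sum_le_sum_abs _ _) (abs_nonneg _)
    _ ≤ ∑ l ∈ univ.erase k, cofactor r l x v := by
        refine sum_le_sum fun l hl => ?_
        rw [← sqDist_mul_prod_erase_erase (ne_of_mem_erase hl)]
        have hP := prod_nonneg fun j (_ : j ∈ (univ.erase k).erase l) =>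
          sqDist_nonneg (r := r) j x v
        have h2 : 2 * |x - r k| * |v| ≤ sqDist r k x v := by
          simpa [sqDist, sq_abs] using two_mul_le_add_sq |x - r k| |v|
        rw [abs_mul, abs_of_nonneg hP, abs_mul, abs_two]
        nlinarith
    _ ≤ ∑ l, cofactor r l x v :=
        sum_le_sum_of_subset_of_nonneg (erase_subset _ _) fun l _ _ => cofactor_nonneg l x v

lemma hasDerivAt_critFun (lam x v : ℝ) :
    HasDerivAt (critFun r σ lam x)
      (∑ k, (σ k * r k * cofactor r k x v
        + σ k * (r k * v + lam * (x - r k)) * cofactorDeriv r k x v)) v := by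
  refine HasDerivAt.fun_sum fun k _ => ?_
  have hlin : HasDerivAt (fun v => σ k * (r k * v + lam * (x - r k))) (σ k * r k) v := by
    simpa using (((hasDerivAt_id v).const_mul (r k)).add_const (lam * (x - r k))).const_mul (σ k)
  convert hlin.fun_mul (hasDerivAt_cofactor k x v) using 1

lemma strictMono_critFun [Nonempty ι] (hσ : ∀ k, |σ k| ≤ 1) (hr : Function.Injective r)
    {lam : ℝ} (hlam : ∀ k, Fintype.card ι * |lam| < σ k * r k) (x : ℝ) :
    StrictMono (critFun r σ lam x) := by
  refine strictMono_of_hasDerivAt_pos (hasDerivAt_critFun lam x) fun v => ?_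
  have hterm (k : ι) : -(|lam| * ∑ l, cofactor r l x v)
      ≤ σ k * (r k * v + lam * (x - r k)) * cofactorDeriv r k x v := by
    have hσr : 0 ≤ σ k * r k := (by positivity : (0 : ℝ) ≤ Fintype.card ι * |lam|).trans (hlam k).le
    have hb : |σ k * lam * (x - r k) * cofactorDeriv r k x v| ≤ |lam| * ∑ l, cofactor r l x v := by
      rw [abs_mul, abs_mul, abs_mul, mul_assoc, mul_assoc]
      calc |σ k| * (|lam| * (|x - r k| * |cofactorDeriv r k x v|))
          ≤ |lam| * (|x - r k| * |cofactorDeriv r k x v|) :=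
            mul_le_of_le_one_left (by positivity) (hσ k)
        _ ≤ |lam| * ∑ l, cofactor r l x v :=
            mul_le_mul_of_nonneg_left (abs_sub_mul_abs_cofactorDeriv_le k x v) (abs_nonneg _)
    calc -(|lam| * ∑ l, cofactor r l x v)
        ≤ σ k * lam * (x - r k) * cofactorDeriv r k x v := (neg_le_neg hb).trans (neg_abs_le _)
      _ ≤ σ k * r k * (v * cofactorDeriv r k x v) + σ k * lam * (x - r k) * cofactorDeriv r k x v :=
          le_add_of_nonneg_left (mul_nonneg hσr (mul_cofactorDeriv_nonneg k x v))
      _ = σ k * (r k * v + lam * (x - r k)) * cofactorDeriv r k x v := by ring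
  have hsum := sum_le_sum fun k (_ : k ∈ univ) => hterm k
  have hpos := sum_mul_cofactor_pos hr (c := fun k => σ k * r k - Fintype.card ι * |lam|)
    (fun k => sub_pos.2 (hlam k)) x v
  simp only [sum_const, card_univ, nsmul_eq_mul, sub_mul, sum_sub_distrib, ← mul_sum] at hsum hpos
  rw [sum_add_distrib]
  linarith

lemma continuous_critFun_left (lam v : ℝ) : Continuous fun x => critFun r σ lam x v := by
  unfold critFun cofactor sqDist
  fun_prop

lemma exists_critFun_eq_zero [Nonempty ι] (hpos : ∀ k, 0 < σ k * r k)
    (hr : Function.Injective r) (lam x : ℝ) : ∃ v, critFun r σ lam x v = 0 := by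
  have hcont : Continuous (critFun r σ lam x) :=
    continuous_iff_continuousAt.2 fun v => (hasDerivAt_critFun lam x v).continuousAt
  -- the factors in front of the cofactors are affine in `v` with positive slopes `σ k * r k`
  have htop : ∀ᶠ v in atTop, ∀ k, 0 < σ k * (r k * v + lam * (x - r k)) := by
    refine eventually_all.2 fun k => ?_
    filter_upwards [eventually_gt_atTop (|σ k * (lam * (x - r k))| / (σ k * r k))]
      with v hv
    have := (div_lt_iff₀ (hpos k)).1 hv
    nlinarith [neg_abs_le (σ k * (lam * (x - r k)))]
  have hbot : ∀ᶠ v in atBot, ∀ k, 0 < -(σ k * (r k * v + lam * (x - r k))) := by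
    refine eventually_all.2 fun k => ?_
    filter_upwards [eventually_lt_atBot (-|σ k * (lam * (x - r k))| / (σ k * r k))]
      with v hv
    have := (lt_div_iff₀ (hpos k)).1 hv
    nlinarith [le_abs_self (σ k * (lam * (x - r k)))]
  obtain ⟨V, hV⟩ := htop.exists
  obtain ⟨W, hW⟩ := hbot.exists
  have hVpos := sum_mul_cofactor_pos hr hV x V
  have hWneg := sum_mul_cofactor_pos hr hW x W
  simp only [neg_mul, sum_neg_distrib, neg_pos] at hWneg
  exact mem_range_of_exists_le_of_exists_ge hcont ⟨W, hWneg.le⟩ ⟨V, hVpos.le⟩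

theorem exists_pos_isConnected_critFun_zeroSet [Nonempty ι] (hσ : ∀ k, |σ k| ≤ 1)
    (hpos : ∀ k, 0 < σ k * r k) (hr : Function.Injective r) :
    ∃ lam₀ > (0 : ℝ), ∀ lam : ℝ, |lam| ≤ lam₀ →
      IsConnected ({OnePoint.infty} ∪ ((fun z : ℂ => (z : OnePoint ℂ)) ''
        {z : ℂ | critFun r σ lam z.re (z.im + lam) = 0})) := by
  obtain ⟨k₀, -, hk₀⟩ := exists_min_image univ (fun k => σ k * r k) univ_nonempty
  have hn : (0 : ℝ) < Fintype.card ι := by exact_mod_cast Fintype.card_pos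
  have hμ := hpos k₀
  refine ⟨σ k₀ * r k₀ / (2 * Fintype.card ι), by positivity, fun lam hlam => ?_⟩
  have hsmall (k : ι) : Fintype.card ι * |lam| < σ k * r k :=
    calc Fintype.card ι * |lam| ≤ Fintype.card ι * (σ k₀ * r k₀ / (2 * Fintype.card ι)) := by
          gcongr
      _ = σ k₀ * r k₀ / 2 := by field_simp
      _ < σ k * r k := by linarith [hk₀ k (mem_univ k)]
  refine isConnected_singleton_infty_union_zeroSet (g := fun x y => critFun r σ lam x (y + lam))
    (fun x => (strictMono_critFun hσ hr hsmall x).comp (strictMono_id.add_const lam))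
    (fun y => continuous_critFun_left lam (y + lam)) fun x => ?_
  obtain ⟨v, hv⟩ := exists_critFun_eq_zero hpos hr lam x
  exact ⟨v - lam, by simpa using hv⟩

end CritFun

section ComplexIdentity

variable {κ : Type*} [Fintype κ] [DecidableEq κ]

lemma hasDerivAt_prod_sub (c : κ → ℂ) (z : ℂ) :
    HasDerivAt (fun w => ∏ l, (w - c l)) (∑ j, ∏ l ∈ univ.erase j, (z - c l)) z := by
  simpa using HasDerivAt.fun_finsetProd (u := univ) fun l _ => (hasDerivAt_id z).sub_const (c l)

lemma mul_sum_prod_erase_mul_conj (z : ℂ) (f : κ → ℂ) :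
    z * (∑ j, ∏ l ∈ univ.erase j, f l) * conj (∏ l, f l)
      = ∑ j, z * conj (f j) * ((∏ l ∈ univ.erase j, normSq (f l) : ℝ) : ℂ) := by
  rw [mul_sum, sum_mul]
  refine sum_congr rfl fun j _ => ?_
  rw [map_prod, ← mul_prod_erase univ (fun l => conj (f l)) (mem_univ j), ofReal_prod]
  simp only [← mul_conj, prod_mul_distrib]
  ring

lemma normSq_sub_ofReal_sub_mul_I (ρ lam : ℝ) (z : ℂ) :
    normSq (z - (ρ - lam * I)) = (z.re - ρ) ^ 2 + (z.im + lam) ^ 2 := by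
  simp only [normSq_apply, sub_re, sub_im, mul_re, mul_im, ofReal_re, ofReal_im, I_re, I_im]
  ring

lemma im_mul_conj_sub_ofReal_sub_mul_I (ρ lam : ℝ) (z : ℂ) :
    (z * conj (z - (ρ - lam * I))).im = -(ρ * (z.im + lam) + lam * (z.re - ρ)) := by
  simp only [map_sub, map_mul, conj_ofReal, conj_I, mul_im, sub_re, sub_im, mul_re, conj_re,
    conj_im, ofReal_re, ofReal_im, neg_re, neg_im, I_re, I_im]
  ring

omit [DecidableEq κ] in
lemma normSq_prod_sub_shift (ρ : κ → ℝ) (lam : ℝ) (z : ℂ) :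
    normSq (∏ l, (z - (ρ l - lam * I))) = ∏ l, sqDist ρ l z.re (z.im + lam) := by
  simp only [map_prod, normSq_sub_ofReal_sub_mul_I, sqDist]

lemma im_mul_deriv_prod_sub_shift_mul_conj (ρ : κ → ℝ) (lam : ℝ) (z : ℂ) :
    (z * deriv (fun w => ∏ l, (w - (ρ l - lam * I))) z * conj (∏ l, (z - (ρ l - lam * I)))).im
      = -∑ j, (ρ j * (z.im + lam) + lam * (z.re - ρ j)) * cofactor ρ j z.re (z.im + lam) := by
  simp only [(hasDerivAt_prod_sub _ z).deriv, mul_sum_prod_erase_mul_conj, im_sum, im_mul_ofReal,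
    im_mul_conj_sub_ofReal_sub_mul_I, normSq_sub_ofReal_sub_mul_I, cofactor, sqDist, neg_mul,
    sum_neg_distrib]

lemma im_mul_sub_mul_conj (z P Q P' Q' : ℂ) :
    (z * (Q' * P - P' * Q) * conj (P * Q)).im
      = normSq P * (z * Q' * conj Q).im - normSq Q * (z * P' * conj P).im := by
  have h : z * (Q' * P - P' * Q) * conj (P * Q)
      = z * Q' * conj Q * (P * conj P) - z * P' * conj P * (Q * conj Q) := by
    rw [map_mul]; ring
  rw [h, mul_conj, mul_conj, sub_im, im_mul_ofReal, im_mul_ofReal]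
  ring

end ComplexIdentity

section SumType

variable {κ₁ κ₂ : Type*} [Fintype κ₁] [DecidableEq κ₁] [Fintype κ₂] [DecidableEq κ₂]

lemma cofactor_sumElim_inl (r₁ : κ₁ → ℝ) (r₂ : κ₂ → ℝ) (j : κ₁) (x v : ℝ) :
    cofactor (Sum.elim r₁ r₂) (.inl j) x v = cofactor r₁ j x v * ∏ l, sqDist r₂ l x v := by
  have : (univ : Finset (κ₁ ⊕ κ₂)).erase (.inl j) = (univ.erase j).disjSum univ := by
    ext (k | k) <;> simp
  rw [cofactor, this, prod_disjSum]
  rfl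

lemma cofactor_sumElim_inr (r₁ : κ₁ → ℝ) (r₂ : κ₂ → ℝ) (j : κ₂) (x v : ℝ) :
    cofactor (Sum.elim r₁ r₂) (.inr j) x v = (∏ l, sqDist r₁ l x v) * cofactor r₂ j x v := by
  have : (univ : Finset (κ₁ ⊕ κ₂)).erase (.inr j) = univ.disjSum (univ.erase j) := by
    ext (k | k) <;> simp
  rw [cofactor, this, prod_disjSum]
  rfl

lemma critFun_sumElim (r₁ : κ₁ → ℝ) (r₂ : κ₂ → ℝ) (lam x v : ℝ) :
    critFun (Sum.elim r₁ r₂) (Sum.elim (fun _ => 1) (fun _ => -1)) lam x v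
      = (∏ l, sqDist r₂ l x v) * ∑ j, (r₁ j * v + lam * (x - r₁ j)) * cofactor r₁ j x v
        - (∏ l, sqDist r₁ l x v) * ∑ j, (r₂ j * v + lam * (x - r₂ j)) * cofactor r₂ j x v := by
  simp only [critFun, Fintype.sum_sum_type, Sum.elim_inl, Sum.elim_inr, cofactor_sumElim_inl,
    cofactor_sumElim_inr, mul_sum]
  rw [sub_eq_add_neg, ← sum_neg_distrib]
  congr 1 <;> refine sum_congr rfl fun j _ => by ring

end SumType

lemma qLam_eq_prod (d : ℕ) (b : Fin d → ℝ) (lam : ℝ) :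
    qLam d b lam = fun w => ∏ l, (w - (((-b l : ℝ) : ℂ) - lam * I)) := by
  funext w
  simp only [qLam, ofReal_neg]

lemma pLam_eq_prod (d : ℕ) (A : ℝ) (a : Fin d → ℝ) (lam : ℝ) :
    pLam d A a lam = fun w => ∏ l, (w - (((Fin.cons A a : Fin (d + 1) → ℝ) l : ℂ) - lam * I)) := by
  funext w
  simp only [pLam, Fin.prod_univ_succ, Fin.cons_zero, Fin.cons_succ]

lemma im_Nh_mul_conj_Dh (d : ℕ) (A : ℝ) (a b : Fin d → ℝ) (lam : ℝ) (z : ℂ) :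
    (Nh d A a b lam z * conj (Dh d A a b lam z)).im
      = -critFun (Sum.elim (fun j => -b j) (Fin.cons A a)) (Sum.elim (fun _ => 1) (fun _ => -1))
          lam z.re (z.im + lam) := by
  rw [Nh, Dh, im_mul_sub_mul_conj, critFun_sumElim]
  rw [qLam_eq_prod, pLam_eq_prod, im_mul_deriv_prod_sub_shift_mul_conj,
    im_mul_deriv_prod_sub_shift_mul_conj, normSq_prod_sub_shift, normSq_prod_sub_shift]
  ring

lemma injective_sumElim_neg_cons {d : ℕ} {a b : Fin d → ℝ} {A : ℝ} (hba : ∀ j, b j < a j)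
    (hab : ∀ i j : Fin d, i < j → a i < b j) (haA : ∀ j, a j < A) (hA : A < 0) :
    Function.Injective (Sum.elim (fun j => -b j) (Fin.cons A a : Fin (d + 1) → ℝ)) := by
  have ha : StrictMono a := fun i j hij => (hab i j hij).trans (hba j)
  have hb : StrictMono b := fun i j hij => (hba i).trans (hab i j hij)
  refine (neg_injective.comp hb.injective).sumElim
    (Fin.cons_injective_iff.2 ⟨fun ⟨j, hj⟩ => (haA j).ne hj, ha.injective⟩) fun i k => ?_
  refine Fin.cases ?_ (fun j => ?_) k
  · simp only [Function.comp_apply, Fin.cons_zero]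
    linarith [hba i, haA i]
  · simp only [Function.comp_apply, Fin.cons_succ]
    linarith [hba i, haA i, haA j]

theorem stmt7_general (d : ℕ) (a b : Fin d → ℝ) (A : ℝ)
    (hba : ∀ j, b j < a j) (hab : ∀ i j : Fin d, i < j → a i < b j)
    (haA : ∀ j, a j < A) (hA : A < 0) :
    ∃ lam₀ > (0 : ℝ), ∀ lam : ℝ, |lam| ≤ lam₀ →
      IsConnected ({OnePoint.infty} ∪ ((fun z : ℂ => (z : OnePoint ℂ)) ''
        {z : ℂ | (Nh d A a b lam z * (starRingEnd ℂ) (Dh d A a b lam z)).im = 0})) := by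
  have hcons : ∀ k, (Fin.cons A a : Fin (d + 1) → ℝ) k < 0 :=
    Fin.cases hA fun j => (haA j).trans hA
  have hb : ∀ j, b j < 0 := fun j => (hba j).trans (hcons j.succ)
  obtain ⟨lam₀, hlam₀, h⟩ := exists_pos_isConnected_critFun_zeroSet
    (r := Sum.elim (fun j => -b j) (Fin.cons A a)) (σ := Sum.elim (fun _ => 1) (fun _ => -1))
    (by rintro (j | j) <;> simp) (by rintro (j | j) <;> simp [hb, hcons])
    (injective_sumElim_neg_cons hba hab haA hA)
  refine ⟨lam₀, hlam₀, fun lam hlam => ?_⟩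
  simpa only [im_Nh_mul_conj_Dh, neg_eq_zero] using h lam hlam

theorem stmt7 (d : ℕ) (hd : 1 ≤ d) (a b : Fin d → ℝ) (A : ℝ)
    (hba : ∀ j, b j < a j) (hab : ∀ i j : Fin d, i < j → a i < b j)
    (haA : ∀ j, a j < A) (hA : A < 0) :
    ∃ lam₀ > (0 : ℝ), ∀ lam : ℝ, |lam| ≤ lam₀ →
      IsConnected ({OnePoint.infty} ∪ ((fun z : ℂ => (z : OnePoint ℂ)) ''
        {z : ℂ | (Nh d A a b lam z * (starRingEnd ℂ) (Dh d A a b lam z)).im = 0})) :=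
  stmt7_general d a b A hba hab haA hA
end

section
/- Assume hypothesis (H), and assume moreover that Q(w,t) = b·w + d·t^δ + Q̃, where δ ≥ 1 is an integer with 2δ ≤ κ and m = 2δ, d ∈ ℂ, and every monomial w^{j₂}t^{j₃} of Q̃ satisfies both m·j₂ + 2j₃ > m and j₂ + 2j₃ > 2δ. Then the coefficient of the monomial z^{3ℓ−1}·w in Ñ equals ℓ²·b³; and if d ≠ 0, the coefficient of the monomial z^{3ℓ−1}·t^δ in Ñ equals ℓ²·b²·d. In particular Ñ ≠ 0. -/
/-!
`Ñ(f̃)` is the diagonal of a trilinear form `ntildeForm`, obtained by polarizing each occurrence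
of `f̃`. Write `f̃ = f₀ + h` with `f₀ = z^ℓ (b w + d t^δ)`. For any `z^ℓ P(w, t)` the bracket
`Γ̃_z` vanishes (`z ∂_z` acts as multiplication by `ℓ`), and one gets
`Ñ(f₀) = ℓ² b z^{3ℓ-1} (b w + d t^δ) (b - d t^δ)`, which has the two claimed coefficients.

The remainder `h` does not contribute to these coefficients. Every monomial of `f̃` has
`v`-weight at least `κℓ + m`, and on the face `v = κℓ + m` it has `z`-degree at least `ℓ` or
`t`-degree at least `κ`; the monomials of `h` even have `z`-degree at least `ℓ + 1` there.
A monomial `τ` of `ntildeForm p q r` comes from monomials of `p`, `q`, `r` summing to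
`τ · z w^j` with `j ≤ 2`. For both target monomials this sum has `v`-weight at most
`3(κℓ + m)`, `z`-degree `3ℓ` and `t`-degree `< κ`, so all three monomials lie on the face with
`z`-degree exactly `ℓ`, which excludes a monomial of `h` in any slot.
-/

open MvPolynomial

/-- The numerator `Ñ = ∂_z f̃ · Γ̃_w − ∂_w f̃ · Γ̃_z` of the equation cutting out the
Log-inflection points on `{f̃ = 0}`, where the variables are `z = X 0`, `w = X 1`, `t = X 2`,
`Γ̃_z = ∂_z(z ∂_z f̃)·(w+1)∂_w f̃ − z ∂_z f̃·∂_z((w+1)∂_w f̃)` and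
`Γ̃_w = ∂_w(z ∂_z f̃)·(w+1)∂_w f̃ − z ∂_z f̃·∂_w((w+1)∂_w f̃)`. -/
noncomputable def Ntilde (f : MvPolynomial (Fin 3) ℂ) : MvPolynomial (Fin 3) ℂ :=
  pderiv 0 f *
      (pderiv 1 (X 0 * pderiv 0 f) * ((X 1 + 1) * pderiv 1 f) -
        (X 0 * pderiv 0 f) * pderiv 1 ((X 1 + 1) * pderiv 1 f)) -
    pderiv 1 f *
      (pderiv 0 (X 0 * pderiv 0 f) * ((X 1 + 1) * pderiv 1 f) -
        (X 0 * pderiv 0 f) * pderiv 0 ((X 1 + 1) * pderiv 1 f))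

namespace MvPolynomial

variable {σ R : Type*} [CommSemiring R]

theorem pderiv_comm (i j : σ) (p : MvPolynomial σ R) :
    pderiv i (pderiv j p) = pderiv j (pderiv i p) := by
  classical
  induction p using MvPolynomial.induction_on with
  | C a => simp
  | add p q hp hq => simp only [map_add, hp, hq]
  | mul_X p k hp =>
    simp only [Derivation.leibniz, pderiv_X, smul_eq_mul, map_add, hp, Pi.single_apply]
    split_ifs <;> simp only [Derivation.map_one_eq_zero, map_zero, mul_zero, add_zero, zero_add] <;>
      ring

theorem mem_support_of_mem_support_pderiv {i : σ} {p : MvPolynomial σ R} {n : σ →₀ ℕ}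
    (h : n ∈ (pderiv i p).support) : n + Finsupp.single i 1 ∈ p.support := by
  rw [mem_support_iff, coeff_pderiv] at h
  exact mem_support_iff.mpr (left_ne_zero_of_mul h)

theorem mem_support_of_mem_support_X_mul_pderiv {i : σ} {p : MvPolynomial σ R} {n : σ →₀ ℕ}
    (h : n ∈ (X i * pderiv i p).support) : n ∈ p.support := by
  classical
  obtain ⟨n', hn', rfl⟩ := Finset.mem_map.mp ((support_X_mul i _).subset h)
  simpa [add_comm] using mem_support_of_mem_support_pderiv hn'

theorem exists_mem_support_of_mem_support_X_add_one_mul_pderiv {i : σ}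
    {p : MvPolynomial σ R} {n : σ →₀ ℕ} (h : n ∈ ((X i + 1) * pderiv i p).support) :
    ∃ j ≤ 1, n + Finsupp.single i j ∈ p.support := by
  classical
  rw [add_mul, one_mul] at h
  rcases Finset.mem_union.mp (support_add h) with h | h
  · exact ⟨0, zero_le_one, by simpa using mem_support_of_mem_support_X_mul_pderiv h⟩
  · exact ⟨1, le_rfl, mem_support_of_mem_support_pderiv h⟩

end MvPolynomial

section TrilinearForm

variable {R : Type*} [CommRing R]

/-- `gammaForm 0 f f` and `gammaForm 1 f f` are `Γ̃_z` and `Γ̃_w`. -/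
noncomputable def gammaForm (i : Fin 3) (q r : MvPolynomial (Fin 3) R) :
    MvPolynomial (Fin 3) R :=
  pderiv i (X 0 * pderiv 0 q) * ((X 1 + 1) * pderiv 1 r) -
    (X 0 * pderiv 0 q) * pderiv i ((X 1 + 1) * pderiv 1 r)

noncomputable def ntildeForm (p q r : MvPolynomial (Fin 3) R) : MvPolynomial (Fin 3) R :=
  pderiv 0 p * gammaForm 1 q r - pderiv 1 p * gammaForm 0 q r

theorem Ntilde_eq_ntildeForm (f : MvPolynomial (Fin 3) ℂ) : Ntilde f = ntildeForm f f f := rfl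

theorem ntildeForm_add_self (f h : MvPolynomial (Fin 3) R) :
    ntildeForm (f + h) (f + h) (f + h) = ntildeForm f f f + ntildeForm h (f + h) (f + h) +
      ntildeForm f h (f + h) + ntildeForm f f h := by
  simp only [ntildeForm, gammaForm, map_add, mul_add, add_mul]
  ring

theorem exists_add_eq_of_mem_support_gammaForm {i : Fin 3} {q r : MvPolynomial (Fin 3) R}
    {n : Fin 3 →₀ ℕ} (h : n ∈ (gammaForm i q r).support) :
    ∃ ν ∈ q.support, ∃ ρ ∈ r.support, ∃ j ≤ 1,
      ν + ρ = n + Finsupp.single i 1 + Finsupp.single 1 j := by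
  classical
  rcases Finset.mem_union.mp (support_sub _ _ _ h) with h | h <;>
    obtain ⟨β, hβ, γ, hγ, rfl⟩ := Finset.mem_add.mp (support_mul _ _ h)
  · obtain ⟨j, hj, hγ⟩ := exists_mem_support_of_mem_support_X_add_one_mul_pderiv hγ
    refine ⟨_, mem_support_of_mem_support_X_mul_pderiv (mem_support_of_mem_support_pderiv hβ),
      _, hγ, j, hj, ?_⟩
    abel
  · obtain ⟨j, hj, hγ⟩ := exists_mem_support_of_mem_support_X_add_one_mul_pderiv
      (mem_support_of_mem_support_pderiv hγ)
    exact ⟨_, mem_support_of_mem_support_X_mul_pderiv hβ, _, hγ, j, hj, by abel⟩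

theorem exists_add_add_eq_of_mem_support_ntildeForm {p q r : MvPolynomial (Fin 3) R}
    {τ : Fin 3 →₀ ℕ} (h : τ ∈ (ntildeForm p q r).support) :
    ∃ μ ∈ p.support, ∃ ν ∈ q.support, ∃ ρ ∈ r.support, ∃ j ≤ 2,
      μ + ν + ρ = τ + Finsupp.single 0 1 + Finsupp.single 1 j := by
  classical
  rcases Finset.mem_union.mp (support_sub _ _ _ h) with h | h <;>
    obtain ⟨α, hα, n, hn, rfl⟩ := Finset.mem_add.mp (support_mul _ _ h) <;>
    obtain ⟨ν, hν, ρ, hρ, j, hj, hνρ⟩ := exists_add_eq_of_mem_support_gammaForm hn <;>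
    refine ⟨_, mem_support_of_mem_support_pderiv hα, ν, hν, ρ, hρ, j + 1, by omega, ?_⟩ <;>
    rw [add_assoc _ ν ρ, hνρ, Finsupp.single_add] <;>
    abel

end TrilinearForm

section WeightedFace

noncomputable def vWeight (κ m : ℕ) : (Fin 3 →₀ ℕ) →+ ℕ := Finsupp.weight ![κ, m, 2]

theorem vWeight_apply (κ m : ℕ) (e : Fin 3 →₀ ℕ) :
    vWeight κ m e = κ * e 0 + m * e 1 + 2 * e 2 := by
  rw [vWeight, Finsupp.weight_apply, Finsupp.sum_fintype _ _ (by simp)]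
  simp [Fin.sum_univ_three, mul_comm]

def aboveFace (v : (Fin 3 →₀ ℕ) →+ ℕ) (W Z T : ℕ) : Set (Fin 3 →₀ ℕ) :=
  {e | W ≤ v e ∧ (v e = W → Z ≤ e 0 ∨ T ≤ e 2)}

variable {v : (Fin 3 →₀ ℕ) →+ ℕ} {W Z T : ℕ}

theorem aboveFace_succ_subset : aboveFace v W (Z + 1) T ⊆ aboveFace v W Z T :=
  fun _ ⟨hW, hface⟩ => ⟨hW, fun h => (hface h).imp_left Nat.le_of_succ_le⟩

theorem mem_aboveFace_of_lt {e : Fin 3 →₀ ℕ} (h : W < v e) : e ∈ aboveFace v W Z T :=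
  ⟨h.le, fun h' => absurd h' h.ne'⟩

theorem three_mul_lt_or_of_mem_aboveFace {μ ν ρ : Fin 3 →₀ ℕ} (hμ : μ ∈ aboveFace v W Z T)
    (hν : ν ∈ aboveFace v W Z T) (hρ : ρ ∈ aboveFace v W Z T)
    (hstrict : μ ∈ aboveFace v W (Z + 1) T ∨ ν ∈ aboveFace v W (Z + 1) T ∨
      ρ ∈ aboveFace v W (Z + 1) T) :
    3 * W < v (μ + ν + ρ) ∨ 3 * Z < (μ + ν + ρ) 0 ∨ T ≤ (μ + ν + ρ) 2 := by
  simp only [aboveFace, Set.mem_ofPred_eq, map_add, Finsupp.coe_add, Pi.add_apply] at *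
  omega

theorem coeff_ntildeForm_eq_zero_of_mem_aboveFace {R : Type*} [CommRing R]
    {p q r : MvPolynomial (Fin 3) R} {τ : Fin 3 →₀ ℕ}
    (hp : p ∈ restrictSupport R (aboveFace v W Z T))
    (hq : q ∈ restrictSupport R (aboveFace v W Z T))
    (hr : r ∈ restrictSupport R (aboveFace v W Z T))
    (hstrict : p ∈ restrictSupport R (aboveFace v W (Z + 1) T) ∨
      q ∈ restrictSupport R (aboveFace v W (Z + 1) T) ∨
      r ∈ restrictSupport R (aboveFace v W (Z + 1) T))
    (hτv : ∀ j ≤ 2, v (τ + Finsupp.single 0 1 + Finsupp.single 1 j) ≤ 3 * W)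
    (hτ0 : τ 0 < 3 * Z) (hτ2 : τ 2 < T) :
    coeff τ (ntildeForm p q r) = 0 := by
  by_contra h
  obtain ⟨μ, hμ, ν, hν, ρ, hρ, j, hj, hsum⟩ :=
    exists_add_add_eq_of_mem_support_ntildeForm (MvPolynomial.mem_support_iff.mpr h)
  have hout := three_mul_lt_or_of_mem_aboveFace (hp hμ) (hq hν) (hr hρ)
    (hstrict.imp (fun h => h hμ) (Or.imp (fun h => h hν) (fun h => h hρ)))
  rw [hsum] at hout
  have h0 : (τ + Finsupp.single 0 1 + Finsupp.single 1 j : Fin 3 →₀ ℕ) 0 = τ 0 + 1 := by simp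
  have h2 : (τ + Finsupp.single 0 1 + Finsupp.single 1 j : Fin 3 →₀ ℕ) 2 = τ 2 := by simp
  have := hτv j hj
  omega

theorem coeff_Ntilde_add_eq_of_mem_aboveFace {f h : MvPolynomial (Fin 3) ℂ} {τ : Fin 3 →₀ ℕ}
    (hf : f ∈ restrictSupport ℂ (aboveFace v W Z T))
    (hh : h ∈ restrictSupport ℂ (aboveFace v W (Z + 1) T))
    (hτv : ∀ j ≤ 2, v (τ + Finsupp.single 0 1 + Finsupp.single 1 j) ≤ 3 * W)
    (hτ0 : τ 0 < 3 * Z) (hτ2 : τ 2 < T) :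
    coeff τ (Ntilde (f + h)) = coeff τ (Ntilde f) := by
  have hh' := restrictSupport_mono ℂ aboveFace_succ_subset hh
  have hfh := add_mem hf hh'
  rw [Ntilde_eq_ntildeForm, Ntilde_eq_ntildeForm, ntildeForm_add_self, coeff_add, coeff_add,
    coeff_add,
    coeff_ntildeForm_eq_zero_of_mem_aboveFace hh' hfh hfh (Or.inl hh) hτv hτ0 hτ2,
    coeff_ntildeForm_eq_zero_of_mem_aboveFace hf hh' hfh (Or.inr (Or.inl hh)) hτv hτ0 hτ2,
    coeff_ntildeForm_eq_zero_of_mem_aboveFace hf hf hh' (Or.inr (Or.inr hh)) hτv hτ0 hτ2,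
    add_zero, add_zero, add_zero]

end WeightedFace

theorem Ntilde_X_pow_mul {ℓ : ℕ} (hℓ : ℓ ≠ 0) {P : MvPolynomial (Fin 3) ℂ}
    (hP : pderiv 0 P = 0) :
    Ntilde (X 0 ^ ℓ * P) = (ℓ ^ 2 : MvPolynomial (Fin 3) ℂ) * X 0 ^ (3 * ℓ - 1) * P *
      ((X 1 + 1) * pderiv 1 P ^ 2 - P * pderiv 1 P - (X 1 + 1) * P * pderiv 1 (pderiv 1 P)) := by
  obtain ⟨L, rfl⟩ : ∃ L, ℓ = L + 1 := ⟨ℓ - 1, by omega⟩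
  rw [show 3 * (L + 1) - 1 = 3 * L + 2 by omega]
  have hP' : pderiv 0 (pderiv 1 P) = 0 := by rw [pderiv_comm, hP, map_zero]
  obtain ⟨f, hf⟩ : ∃ f, f = X 0 ^ (L + 1) * P := ⟨_, rfl⟩
  have hz : pderiv 0 f = (L + 1 : MvPolynomial (Fin 3) ℂ) * X 0 ^ L * P := by
    simp only [hf, Derivation.leibniz, Derivation.leibniz_pow, hP, pderiv_X_self, smul_eq_mul,
      nsmul_eq_mul, mul_zero, zero_add, add_tsub_cancel_right]
    push_cast
    ring
  have hEuler : X 0 * pderiv 0 f = (L + 1 : MvPolynomial (Fin 3) ℂ) * f := by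
    rw [hz, hf]
    ring
  have hw : pderiv 1 f = X 0 ^ (L + 1) * pderiv 1 P := by
    simp [hf, Derivation.leibniz, Derivation.leibniz_pow]
  rw [← hf, Ntilde, hEuler]
  simp only [Derivation.leibniz, Derivation.leibniz_pow, Derivation.map_natCast,
    Derivation.map_one_eq_zero, map_add, pderiv_X_self, pderiv_X_of_ne (by decide : (0 : Fin 3) ≠ 1),
    pderiv_X_of_ne (by decide : (1 : Fin 3) ≠ 0), hz, hw, hP', smul_eq_mul, nsmul_eq_mul,
    add_tsub_cancel_right]
  push_cast
  rw [hf]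
  ring

section LeadingTerm

variable {ℓ δ : ℕ} (b d : ℂ)

theorem Ntilde_X_pow_mul_binomial (hℓ : ℓ ≠ 0) :
    Ntilde (X 0 ^ ℓ * (C b * X 1 + C d * X 2 ^ δ)) =
      C ((ℓ : ℂ) ^ 2 * b) * X 0 ^ (3 * ℓ - 1) * (C b * X 1 + C d * X 2 ^ δ) *
        (C b - C d * X 2 ^ δ) := by
  have hz : pderiv 0 (C b * X 1 + C d * X 2 ^ δ : MvPolynomial (Fin 3) ℂ) = 0 := by simp
  have hw : pderiv 1 (C b * X 1 + C d * X 2 ^ δ : MvPolynomial (Fin 3) ℂ) = C b := by simp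
  rw [Ntilde_X_pow_mul hℓ hz, hw, pderiv_C, map_mul, map_pow, map_natCast]
  ring

theorem coeff_Ntilde_X_pow_mul_binomial_w (hℓ : ℓ ≠ 0) (hδ : δ ≠ 0) :
    coeff (Finsupp.single 0 (3 * ℓ - 1) + Finsupp.single 1 1)
      (Ntilde (X 0 ^ ℓ * (C b * X 1 + C d * X 2 ^ δ))) = (ℓ : ℂ) ^ 2 * b ^ 3 := by
  rw [Ntilde_X_pow_mul_binomial b d hℓ]
  simp only [X, C_apply, monomial_pow, monomial_mul, mul_add, add_mul, mul_sub, coeff_add,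
    coeff_sub, coeff_monomial]
  simp [Finsupp.ext_iff, Fin.forall_fin_succ, hδ, pow_succ, mul_assoc, mul_comm]

theorem coeff_Ntilde_X_pow_mul_binomial_t (hℓ : ℓ ≠ 0) (hδ : δ ≠ 0) :
    coeff (Finsupp.single 0 (3 * ℓ - 1) + Finsupp.single 2 δ)
      (Ntilde (X 0 ^ ℓ * (C b * X 1 + C d * X 2 ^ δ))) = (ℓ : ℂ) ^ 2 * b ^ 2 * d := by
  rw [Ntilde_X_pow_mul_binomial b d hℓ]
  simp only [X, C_apply, monomial_pow, monomial_mul, mul_add, add_mul, mul_sub, coeff_add,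
    coeff_sub, coeff_monomial]
  simp [Finsupp.ext_iff, Fin.forall_fin_succ, hδ, pow_succ, mul_assoc, mul_comm, mul_left_comm]

end LeadingTerm

section Remainder

variable {ℓ κ m : ℕ}

theorem X_pow_mul_binomial_mem_aboveFace {δ : ℕ} (hmδ : m = 2 * δ) (b d : ℂ) :
    X 0 ^ ℓ * (C b * X 1 + C d * X 2 ^ δ) ∈
      restrictSupport ℂ (aboveFace (vWeight κ m) (κ * ℓ + m) ℓ κ) := by
  simp only [X, C_apply, monomial_pow, monomial_mul, mul_add]
  refine add_mem ?_ ?_ <;> simp [aboveFace, vWeight_apply, hmδ]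

theorem remainder_mem_aboveFace (hℓ : ℓ ≠ 0) (hmκ : m ≤ κ) (a c : ℂ)
    {Qt R : MvPolynomial (Fin 3) ℂ} (hQt : ∀ e ∈ Qt.support, m < m * e 1 + 2 * e 2)
    (hR : ∀ e ∈ R.support, κ * (ℓ + 1) < κ * e 0 + m * e 1 + 2 * e 2) :
    C c * X 0 ^ (ℓ - 1) * X 2 ^ κ + X 0 ^ ℓ * Qt + C a * X 0 ^ (ℓ + 1) + R ∈
      restrictSupport ℂ (aboveFace (vWeight κ m) (κ * ℓ + m) (ℓ + 1) κ) := by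
  obtain ⟨L, rfl⟩ : ∃ L, ℓ = L + 1 := ⟨ℓ - 1, by omega⟩
  refine add_mem (add_mem (add_mem ?_ ?_) ?_) ?_
  · simp only [C_apply, X_pow_eq_monomial, monomial_mul, monomial_mem_restrictSupport,
      add_tsub_cancel_right, zero_add]
    refine Or.inl ⟨?_, fun _ => Or.inr ?_⟩ <;>
      simp only [vWeight_apply, Finsupp.coe_add, Pi.add_apply, Finsupp.single_apply,
        Fin.reduceEq, if_true, if_false, add_zero, zero_add] <;>
      nlinarith
  · have hX : X 0 ^ (L + 1) ∈ restrictSupport ℂ {Finsupp.single (0 : Fin 3) (L + 1)} := by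
      simp [X_pow_eq_monomial]
    have hQt' : Qt ∈ restrictSupport ℂ {e | m < m * e 1 + 2 * e 2} := fun e he => hQt e he
    refine restrictSupport_mono ℂ (Set.add_subset_iff.mpr ?_)
      (restrictSupport_add ℂ _ _ ▸ Submodule.mul_mem_mul hX hQt')
    rintro _ rfl e he
    apply mem_aboveFace_of_lt
    simp only [Set.mem_ofPred_eq] at he
    simp only [vWeight_apply, Finsupp.coe_add, Pi.add_apply, Finsupp.single_apply, Fin.reduceEq,
      if_true, if_false, zero_add]
    nlinarith
  · simp only [C_apply, X_pow_eq_monomial, monomial_mul, monomial_mem_restrictSupport, zero_add]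
    refine Or.inl ⟨?_, fun _ => Or.inl ?_⟩ <;>
      simp only [vWeight_apply, Finsupp.single_apply, Fin.reduceEq, if_true, if_false] <;>
      nlinarith
  · refine fun e he => mem_aboveFace_of_lt ?_
    rw [vWeight_apply]
    nlinarith [hR e he]

theorem coeff_Ntilde_binomial_add_remainder {δ : ℕ} (hℓ : ℓ ≠ 0) (hmκ : m ≤ κ)
    (hδ : 1 ≤ δ) (hδκ : 2 * δ ≤ κ) (hmδ : m = 2 * δ) (a b c d : ℂ)
    {Qt R : MvPolynomial (Fin 3) ℂ} (hQt : ∀ e ∈ Qt.support, m < m * e 1 + 2 * e 2)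
    (hR : ∀ e ∈ R.support, κ * (ℓ + 1) < κ * e 0 + m * e 1 + 2 * e 2) {τ : Fin 3 →₀ ℕ}
    (hτ : τ = Finsupp.single 0 (3 * ℓ - 1) + Finsupp.single 1 1 ∨
      τ = Finsupp.single 0 (3 * ℓ - 1) + Finsupp.single 2 δ) :
    coeff τ (Ntilde (X 0 ^ ℓ * (C b * X 1 + C d * X 2 ^ δ) +
      (C c * X 0 ^ (ℓ - 1) * X 2 ^ κ + X 0 ^ ℓ * Qt + C a * X 0 ^ (ℓ + 1) + R))) =
    coeff τ (Ntilde (X 0 ^ ℓ * (C b * X 1 + C d * X 2 ^ δ))) := by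
  have h3ℓ : 3 * ℓ - 1 + 1 = 3 * ℓ := by omega
  refine coeff_Ntilde_add_eq_of_mem_aboveFace (X_pow_mul_binomial_mem_aboveFace hmδ b d)
    (remainder_mem_aboveFace hℓ hmκ a c hQt hR) (fun j hj => ?_) ?_ ?_ <;>
  rcases hτ with rfl | rfl <;>
  simp only [vWeight_apply, Finsupp.coe_add, Pi.add_apply, Finsupp.single_apply, Fin.reduceEq,
    if_true, if_false, add_zero, zero_add, h3ℓ] <;>
  nlinarith

end Remainder

theorem stmt9_general (ℓ κ m δ : ℕ) (hℓ : 2 ≤ ℓ) (hmκ : m ≤ κ)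
    (hδ1 : 1 ≤ δ) (hδκ : 2 * δ ≤ κ) (hmδ : m = 2 * δ)
    (a b c : ℂ) (hb : b ≠ 0) (d : ℂ)
    (f Q R Qt : MvPolynomial (Fin 3) ℂ)
    (hR : ∀ mo ∈ R.support, κ * mo 0 + m * mo 1 + 2 * mo 2 > κ * (ℓ + 1))
    (hf : f = C c * X 0 ^ (ℓ - 1) * X 2 ^ κ + X 0 ^ ℓ * Q + C a * X 0 ^ (ℓ + 1) + R)
    (hQt : ∀ mo ∈ Qt.support, m * mo 1 + 2 * mo 2 > m ∧ mo 1 + 2 * mo 2 > 2 * δ)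
    (hQdec : Q = C b * X 1 + C d * X 2 ^ δ + Qt) :
    (Ntilde f).coeff (Finsupp.single 0 (3 * ℓ - 1) + Finsupp.single 1 1)
        = (ℓ : ℂ) ^ 2 * b ^ 3 ∧
      (d ≠ 0 →
        (Ntilde f).coeff (Finsupp.single 0 (3 * ℓ - 1) + Finsupp.single 2 δ)
          = (ℓ : ℂ) ^ 2 * b ^ 2 * d) ∧
      Ntilde f ≠ 0 := by
  have hℓ0 : ℓ ≠ 0 := by omega
  have hδ0 : δ ≠ 0 := by omega
  have hsplit : f = X 0 ^ ℓ * (C b * X 1 + C d * X 2 ^ δ) +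
      (C c * X 0 ^ (ℓ - 1) * X 2 ^ κ + X 0 ^ ℓ * Qt + C a * X 0 ^ (ℓ + 1) + R) := by
    rw [hf, hQdec]
    ring
  have hlead := fun τ hτ => hsplit ▸ coeff_Ntilde_binomial_add_remainder (τ := τ) hℓ0 hmκ hδ1
    hδκ hmδ a b c d (fun e he => (hQt e he).1) hR hτ
  have hw := (hlead _ (Or.inl rfl)).trans (coeff_Ntilde_X_pow_mul_binomial_w b d hℓ0 hδ0)
  have ht := (hlead _ (Or.inr rfl)).trans (coeff_Ntilde_X_pow_mul_binomial_t b d hℓ0 hδ0)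
  refine ⟨hw, fun _ => ht, fun h0 => ?_⟩
  rw [h0, coeff_zero] at hw
  exact (by simp [hb, hℓ0] : (ℓ : ℂ) ^ 2 * b ^ 3 ≠ 0) hw.symm

theorem stmt9 (ℓ κ m δ : ℕ) (hℓ : 2 ≤ ℓ) (hκ : 1 ≤ κ) (hm1 : 1 ≤ m) (hmκ : m ≤ κ)
    (hδ1 : 1 ≤ δ) (hδκ : 2 * δ ≤ κ) (hmδ : m = 2 * δ)
    (a b c : ℂ) (ha : a ≠ 0) (hb : b ≠ 0) (hc : c ≠ 0) (d : ℂ)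
    (f Q R Qt : MvPolynomial (Fin 3) ℂ)
    (hsupp : ∀ mo ∈ f.support, κ * mo 0 + mo 2 ≥ κ * ℓ)
    (hQvars : ∀ mo ∈ Q.support, mo 0 = 0)
    (hQ0 : Q.coeff 0 = 0)
    (hQw : Q.coeff (Finsupp.single 1 1) = b)
    (hR : ∀ mo ∈ R.support, κ * mo 0 + m * mo 1 + 2 * mo 2 > κ * (ℓ + 1))
    (hf : f = C c * X 0 ^ (ℓ - 1) * X 2 ^ κ + X 0 ^ ℓ * Q + C a * X 0 ^ (ℓ + 1) + R)
    (hQtvars : ∀ mo ∈ Qt.support, mo 0 = 0)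
    (hQt : ∀ mo ∈ Qt.support, m * mo 1 + 2 * mo 2 > m ∧ mo 1 + 2 * mo 2 > 2 * δ)
    (hQdec : Q = C b * X 1 + C d * X 2 ^ δ + Qt) :
    (Ntilde f).coeff (Finsupp.single 0 (3 * ℓ - 1) + Finsupp.single 1 1)
        = (ℓ : ℂ) ^ 2 * b ^ 3 ∧
      (d ≠ 0 →
        (Ntilde f).coeff (Finsupp.single 0 (3 * ℓ - 1) + Finsupp.single 2 δ)
          = (ℓ : ℂ) ^ 2 * b ^ 2 * d) ∧
      Ntilde f ≠ 0 :=
  stmt9_general ℓ κ m δ hℓ hmκ hδ1 hδκ hmδ a b c hb d f Q R Qt hR hf hQt hQdec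
end

section
/- Let κ ≥ 1 and ℓ ≥ 1 be integers and let f̃ ∈ ℂ[z,w,t] be a polynomial such that every monomial z^{j₁}w^{j₂}t^{j₃} of f̃ satisfies κ·j₁ + j₃ ≥ κℓ. Then every monomial z^{j₁}w^{j₂}t^{j₃} of the polynomial Ñ satisfies κ·j₁ + j₃ ≥ κ(3ℓ−1); that is, the Newton polyhedron of Ñ is contained in the translation by (2ℓ−1, 0, 0) of the half-space H₁ = {(j₁,j₂,j₃) : j₃ ≥ −κj₁ + ℓκ} (containment in the translates of H₂ = {j₂ ≥ 0} and H₃ = {j₃ ≥ 0} being automatic for polynomials). -/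
open MvPolynomial

/-!
Give the monomial `z^{j₁} w^{j₂} t^{j₃}` the weight `κ j₁ + j₃`. Polynomials whose monomials all
have weight `≥ a` form a multiplicative filtration on which `∂_z` lowers the level by at most `κ`
and `∂_w` does not lower it. Every term of `Ñ` is a product of three factors, each of level
`≥ κℓ` except for exactly one `∂_z`, hence of level `≥ 3κℓ - κ`.
-/

namespace MvPolynomial

variable {R σ : Type*} [CommSemiring R]

variable (R) in
noncomputable def weightFiltration (w : σ → ℕ) (a : ℕ) : Submodule R (MvPolynomial σ R) :=
  restrictSupport R {m | a ≤ Finsupp.weight w m}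

variable {w : σ → ℕ} {a b : ℕ} {p q : MvPolynomial σ R}

theorem mem_weightFiltration_iff :
    p ∈ weightFiltration R w a ↔ ∀ m ∈ p.support, a ≤ Finsupp.weight w m :=
  Iff.rfl

theorem weightFiltration_antitone (h : a ≤ b) :
    weightFiltration R w b ≤ weightFiltration R w a :=
  restrictSupport_mono R fun _ hm ↦ le_trans h hm

theorem weightFiltration_zero : weightFiltration R w 0 = ⊤ :=
  eq_top_iff.2 fun _ _ _ _ ↦ Nat.zero_le _

theorem X_mem_weightFiltration (i : σ) : (X i : MvPolynomial σ R) ∈ weightFiltration R w (w i) :=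
  by
    rw [X, weightFiltration, monomial_mem_restrictSupport]
    simp [Finsupp.weight_single]

theorem mul_mem_weightFiltration (hp : p ∈ weightFiltration R w a)
    (hq : q ∈ weightFiltration R w b) : p * q ∈ weightFiltration R w (a + b) := by
  classical
  intro m hm
  obtain ⟨m₁, hm₁, m₂, hm₂, rfl⟩ := Finset.mem_add.1 (support_mul p q hm)
  simpa only [Set.mem_ofPred_eq, map_add] using Nat.add_le_add (hp hm₁) (hq hm₂)

theorem pderiv_mem_weightFiltration (i : σ) (hp : p ∈ weightFiltration R w a) :
    pderiv i p ∈ weightFiltration R w (a - w i) := by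
  rw [p.as_sum, map_sum]
  refine Submodule.sum_mem _ fun m hm ↦ ?_
  rw [pderiv_monomial, weightFiltration, monomial_mem_restrictSupport]
  by_cases hmi : m i = 0
  · simp [hmi]
  · left
    have hm_weight : a ≤ Finsupp.weight w m := hp hm
    have := Finsupp.weight_sub_single_add (w := w) hmi
    simp only [Set.mem_ofPred_eq]
    omega

end MvPolynomial

theorem Ntilde_mem_weightFiltration {w : Fin 3 → ℕ} {a : ℕ} (hw : w 1 = 0)
    {f : MvPolynomial (Fin 3) ℂ} (hf : f ∈ weightFiltration ℂ w a) :
    Ntilde f ∈ weightFiltration ℂ w (a - w 0 + (a + a)) := by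
  have hfz : pderiv 0 f ∈ weightFiltration ℂ w (a - w 0) := pderiv_mem_weightFiltration 0 hf
  have hfw : pderiv 1 f ∈ weightFiltration ℂ w a := by
    simpa [hw] using pderiv_mem_weightFiltration 1 hf
  have hzfz : X 0 * pderiv 0 f ∈ weightFiltration ℂ w a :=
    weightFiltration_antitone (by omega)
      (mul_mem_weightFiltration (X_mem_weightFiltration 0) hfz)
  have hwfw : (X 1 + 1) * pderiv 1 f ∈ weightFiltration ℂ w a := by
    simpa using mul_mem_weightFiltration (a := 0) (by simp [weightFiltration_zero]) hfw
  have hzfz_w : pderiv 1 (X 0 * pderiv 0 f) ∈ weightFiltration ℂ w a := by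
    simpa [hw] using pderiv_mem_weightFiltration 1 hzfz
  have hwfw_w : pderiv 1 ((X 1 + 1) * pderiv 1 f) ∈ weightFiltration ℂ w a := by
    simpa [hw] using pderiv_mem_weightFiltration 1 hwfw
  have hΓw : pderiv 1 (X 0 * pderiv 0 f) * ((X 1 + 1) * pderiv 1 f) -
      X 0 * pderiv 0 f * pderiv 1 ((X 1 + 1) * pderiv 1 f) ∈ weightFiltration ℂ w (a + a) :=
    sub_mem (mul_mem_weightFiltration hzfz_w hwfw) (mul_mem_weightFiltration hzfz hwfw_w)
  have hΓz : pderiv 0 (X 0 * pderiv 0 f) * ((X 1 + 1) * pderiv 1 f) -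
      X 0 * pderiv 0 f * pderiv 0 ((X 1 + 1) * pderiv 1 f) ∈
        weightFiltration ℂ w (a - w 0 + a) :=
    sub_mem (mul_mem_weightFiltration (pderiv_mem_weightFiltration 0 hzfz) hwfw)
      (weightFiltration_antitone (by omega)
        (mul_mem_weightFiltration hzfz (pderiv_mem_weightFiltration 0 hwfw)))
  exact sub_mem (mul_mem_weightFiltration hfz hΓw)
    (weightFiltration_antitone (by omega) (mul_mem_weightFiltration hfw hΓz))

theorem stmt10_general (κ ℓ : ℕ)
    (f : MvPolynomial (Fin 3) ℂ)
    (hf : ∀ mo ∈ f.support, κ * mo 0 + mo 2 ≥ κ * ℓ) :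
    ∀ mo ∈ (Ntilde f).support, κ * mo 0 + mo 2 ≥ κ * (3 * ℓ - 1) := by
  have weight_eq (mo : Fin 3 →₀ ℕ) : Finsupp.weight ![κ, 0, 1] mo = κ * mo 0 + mo 2 := by
    simp [Finsupp.weight_eq_sum, Fin.sum_univ_three, mul_comm]
  have hN : Ntilde f ∈ weightFiltration ℂ ![κ, 0, 1] (κ * ℓ - κ + (κ * ℓ + κ * ℓ)) :=
    Ntilde_mem_weightFiltration rfl
      (mem_weightFiltration_iff.2 fun mo hmo ↦ (weight_eq mo).symm ▸ hf mo hmo)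
  have h_level : κ * (3 * ℓ - 1) = 3 * (κ * ℓ) - κ := by rw [Nat.mul_sub_one, mul_left_comm]
  intro mo hmo
  have hmo_weight := weight_eq mo ▸ mem_weightFiltration_iff.1 hN mo hmo
  omega

theorem stmt10 (κ ℓ : ℕ) (hκ : 1 ≤ κ) (hℓ : 1 ≤ ℓ)
    (f : MvPolynomial (Fin 3) ℂ)
    (hf : ∀ mo ∈ f.support, κ * mo 0 + mo 2 ≥ κ * ℓ) :
    ∀ mo ∈ (Ntilde f).support, κ * mo 0 + mo 2 ≥ κ * (3 * ℓ - 1) :=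
  stmt10_general κ ℓ f hf
end

section
/- Let m ≥ 1 be an integer, a ∈ ℂ∖{0}, and let z, w be analytic functions on a neighborhood of 0 ∈ ℂ with z(s) = s + o(s) and w(s) = 1 + a·s^m + o(s^m) as s → 0. Then the function g(s) = −(w′(s)/w(s))·(z(s)/z′(s)), which is the logarithmic Gauss map [−(d/ds)log w(s) : (d/ds)log z(s)] read in the affine chart [u:v] ↦ u/v, satisfies g(s) = −a·m·s^m + o(s^m) as s → 0; in particular, the analytic extension of g to 0 has a critical point at s = 0 if and only if m > 1. -/
/-!
The remainder `w - 1 - a s^m` is analytic and `o(s^m)`, so it vanishes to order `> m` at `0`;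
its derivative then vanishes to order `≥ m`, which gives `w' ∼ a m s^(m-1)`. Together with
`z ∼ s`, `z' ∼ 1` and `w ∼ 1`, asymptotic equivalence is compatible with products and quotients,
so `g ∼ -a m s^m`. Hence `g = -a m s^m + o(s)`, whose derivative at `0` is `-a m² 0^(m-1)`,
nonzero exactly when `m = 1`.
-/

open Asymptotics Filter Topology

section AnalyticOrder

variable {𝕜 E : Type*} [NontriviallyNormedField 𝕜] [NormedAddCommGroup E] [NormedSpace 𝕜 E]
  {f : 𝕜 → E} {z₀ : 𝕜} {m n : ℕ}

theorem isBigO_sub_pow_pow_of_le (h : m ≤ n) :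
    (fun z : 𝕜 => (z - z₀) ^ n) =O[𝓝 z₀] fun z => (z - z₀) ^ m := by
  have hsub : Tendsto (fun z : 𝕜 => z - z₀) (𝓝 z₀) (𝓝 0) := tendsto_sub_nhds_zero_iff.2 tendsto_id
  rcases h.lt_or_eq with hlt | rfl
  · exact (isLittleO_pow_pow hlt).isBigO.comp_tendsto hsub
  · exact isBigO_refl _ _

theorem AnalyticAt.isBigO_sub_pow_of_le_analyticOrderAt (hf : AnalyticAt 𝕜 f z₀)
    (hn : n ≤ analyticOrderAt f z₀) : f =O[𝓝 z₀] fun z => (z - z₀) ^ n := by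
  obtain ⟨g, hg, hfg⟩ := (natCast_le_analyticOrderAt hf).1 hn
  refine EventuallyEq.trans_isBigO hfg ?_
  simpa using (isBigO_refl (fun z => (z - z₀) ^ n) (𝓝 z₀)).smul (hg.continuousAt.isBigO_one 𝕜)

theorem AnalyticAt.lt_analyticOrderAt_of_isLittleO (hf : AnalyticAt 𝕜 f z₀)
    (h : f =o[𝓝 z₀] fun z => (z - z₀) ^ n) : n < analyticOrderAt f z₀ := by
  by_contra! hle
  obtain ⟨k, hk⟩ := ENat.ne_top_iff_exists.1 (hle.trans_lt (ENat.natCast_lt_top n)).ne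
  obtain ⟨g, hg, hg₀, hfg⟩ := hf.analyticOrderAt_eq_natCast.1 hk.symm
  have hkn : k ≤ n := by exact_mod_cast hk ▸ hle
  have hsmul : (fun z => (z - z₀) ^ k • g z) =o[𝓝[≠] z₀] fun z => (z - z₀) ^ k :=
    ((h.trans_isBigO (isBigO_sub_pow_pow_of_le hkn)).congr' hfg EventuallyEq.rfl).mono
      nhdsWithin_le_nhds
  have hg_zero : Tendsto g (𝓝[≠] z₀) (𝓝 0) := by
    refine hsmul.tendsto_inv_smul_nhds_zero.congr' ?_
    filter_upwards [self_mem_nhdsWithin] with z hz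
    rw [inv_smul_smul₀ (pow_ne_zero _ (sub_ne_zero.2 hz))]
  exact hg₀ (tendsto_nhds_unique (hg.continuousAt.tendsto.mono_left nhdsWithin_le_nhds) hg_zero)

theorem AnalyticAt.deriv_isBigO_sub_pow_of_isLittleO [CharZero 𝕜] [CompleteSpace E]
    (hf : AnalyticAt 𝕜 f z₀) (h : f =o[𝓝 z₀] fun z => (z - z₀) ^ (n + 1)) :
    deriv f =O[𝓝 z₀] fun z => (z - z₀) ^ (n + 1) := by
  have hf₀ : f z₀ = 0 := h.isBigO.eq_zero_imp.self_of_nhds (by simp)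
  refine hf.deriv.isBigO_sub_pow_of_le_analyticOrderAt ?_
  rw [analyticOrderAt_deriv_ge_iff hf hf₀]
  exact Order.add_one_le_of_lt (by exact_mod_cast hf.lt_analyticOrderAt_of_isLittleO h)

end AnalyticOrder

theorem AnalyticAt.deriv_isEquivalent_of_isLittleO {𝕜 : Type*} [NontriviallyNormedField 𝕜]
    [CharZero 𝕜] [CompleteSpace 𝕜] {w : 𝕜 → 𝕜} {a b : 𝕜} {n : ℕ} (hw : AnalyticAt 𝕜 w 0)
    (ha : a ≠ 0) (h : (fun s => w s - b - a * s ^ (n + 1)) =o[𝓝 0] fun s => s ^ (n + 1)) :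
    deriv w ~[𝓝 0] fun s => a * (n + 1) * s ^ n := by
  have hv : AnalyticAt 𝕜 (fun s => w s - b - a * s ^ (n + 1)) 0 := by fun_prop
  have hderiv : deriv (fun s => w s - b - a * s ^ (n + 1)) =ᶠ[𝓝 0]
      fun s => deriv w s - a * (n + 1) * s ^ n := by
    filter_upwards [hw.eventually_analyticAt] with s hs
    have := (hs.differentiableAt.hasDerivAt.sub_const b).fun_sub
      ((hasDerivAt_pow (n + 1) s).const_mul a)
    rw [this.deriv]
    push_cast
    ring
  have hsmall := ((hv.deriv_isBigO_sub_pow_of_isLittleO (by simpa using h)).trans_isLittleO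
    (by simpa using isLittleO_pow_pow (𝕜 := 𝕜) n.lt_succ_self)).congr' hderiv EventuallyEq.rfl
  have hc : a * (n + 1) ≠ 0 := mul_ne_zero ha (by exact_mod_cast n.succ_ne_zero)
  exact IsLittleO.isEquivalent <| hsmall.trans_isBigO <| by
    simpa [mul_assoc] using isBigO_self_const_mul hc (· ^ n) (𝓝 0)

theorem HasDerivAt.congr_of_isLittleO_sub {𝕜 F : Type*} [NontriviallyNormedField 𝕜]
    [NormedAddCommGroup F] [NormedSpace 𝕜 F] {f g : 𝕜 → F} {f' : F} {x : 𝕜}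
    (hf : HasDerivAt f f' x) (h : (fun y => g y - f y) =o[𝓝 x] fun y => y - x) :
    HasDerivAt g f' x := by
  have hx : g x - f x = 0 := h.isBigO.eq_zero_imp.self_of_nhds (sub_self x)
  have hgf : HasDerivAt (fun y => g y - f y) 0 x := .of_isLittleO (by simpa [hx] using h)
  simpa using hf.fun_add hgf

theorem stmt11 (m : ℕ) (hm : 1 ≤ m) (a : ℂ) (ha : a ≠ 0) (z w : ℂ → ℂ)
    (hz : AnalyticAt ℂ z 0) (hw : AnalyticAt ℂ w 0)
    (hz1 : (fun s : ℂ => z s - s) =o[nhds 0] fun s : ℂ => s)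
    (hw1 : (fun s : ℂ => w s - 1 - a * s ^ m) =o[nhds 0] fun s : ℂ => s ^ m) :
    ((fun s : ℂ => (-(deriv w s / w s) * (z s / deriv z s)) - (-(a * m) * s ^ m))
        =o[nhds 0] fun s : ℂ => s ^ m) ∧
      (deriv (fun s : ℂ => -(deriv w s / w s) * (z s / deriv z s)) 0 = 0 ↔ 1 < m) := by
  obtain ⟨n, rfl⟩ : ∃ n, m = n + 1 := ⟨m - 1, by omega⟩
  have hz0 : z 0 = 0 := by simpa using hz1.isBigO.eq_zero_imp.self_of_nhds rfl
  have hw0 : w 0 = 1 := by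
    simpa [sub_eq_zero] using hw1.isBigO.eq_zero_imp.self_of_nhds (zero_pow n.succ_ne_zero)
  have hdz0 : HasDerivAt z 1 0 := .of_isLittleO (by simpa [hz0] using hz1)
  have hz'_one : deriv z ~[𝓝 0] fun _ => 1 := (isEquivalent_const_iff_tendsto one_ne_zero).2 <| by
    simpa [hdz0.deriv] using hz.deriv.continuousAt.tendsto
  have hw_one : w ~[𝓝 0] fun _ => 1 := (isEquivalent_const_iff_tendsto one_ne_zero).2 <| by
    simpa [hw0] using hw.continuousAt.tendsto
  have hzid : z ~[𝓝 0] id := hz1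
  have hw' := hw.deriv_isEquivalent_of_isLittleO ha hw1
  have hgauss : (fun s => -(deriv w s / w s) * (z s / deriv z s)) ~[𝓝 0]
      fun s => -(a * (n + 1 : ℕ)) * s ^ (n + 1) :=
    ((hw'.div hw_one).neg.mul (hzid.div hz'_one)).congr_right <| .of_forall fun s => by
      simp only [Pi.div_apply, div_one, Pi.mul_apply, id_eq, neg_mul, Nat.cast_add, Nat.cast_one,
        neg_inj]
      ring
  have hexpansion := hgauss.isLittleO.trans_isBigO (isBigO_const_mul_self _ _ _)
  refine ⟨hexpansion, ?_⟩
  have hpow_le_id : (fun s : ℂ => s ^ (n + 1)) =O[𝓝 0] fun s => s - 0 := by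
    simpa using isBigO_sub_pow_pow_of_le (z₀ := (0 : ℂ)) (Nat.le_add_left 1 n)
  have hgauss_deriv := ((hasDerivAt_pow (n + 1) (0 : ℂ)).const_mul
    (-(a * (n + 1 : ℕ)))).congr_of_isLittleO_sub (hexpansion.trans_isBigO hpow_le_id)
  rw [hgauss_deriv.deriv]
  simp [ha, Nat.cast_add_one_ne_zero, Nat.pos_iff_ne_zero]
end

section
/- Let a, b, c, d ∈ ℂ and let f̃(z,w,t) = c·t + z·(w(w+b) + dzw + az²) ∈ ℂ[z,w,t]. Then: (i) the polynomial Ñ does not involve the variable t, i.e. Ñ ∈ ℂ[z,w]; (ii) Ñ is divisible by z², say Ñ = z²·M with M ∈ ℂ[z,w]; (iii) every monomial z^{j₁}w^{j₂} of M satisfies that (j₁, j₂) lies in the convex hull of (2,0), (5,0), (1,4), (0,4), (0,1); and (iv) the coefficient of w in M equals b³ and the coefficient of z² in M equals −3ab², so the truncation of M to the edge joining (2,0) and (0,1) is b³·w − 3ab²·z². -/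
/-!
Ñ can be expanded in closed form: the `t`-term of `f̃` is killed by every partial derivative
in `z` and `w`, and the expansion is `z²` times an explicit polynomial `M` with seventeen
monomials `z^i w^j`. Their exponents satisfy `i + 2j ≥ 2`, `i + j ≤ 5`, `j ≤ 4`, which cut out
the pentagon; a point of that region lies on a horizontal segment from its left boundary (the
edge from `(2,0)` to `(0,1)` or the one from `(0,1)` to `(0,4)`) to the edge from `(5,0)` to
`(1,4)`, hence in the convex hull of the vertices.
-/

open MvPolynomial

@[simp]
lemma Derivation.map_ofNat {R A M : Type*} [CommSemiring R] [CommSemiring A] [AddCommMonoid M]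
    [Algebra R A] [Module A M] [Module R M] (D : Derivation R A M) (n : ℕ) [n.AtLeastTwo] :
    D (no_index (OfNat.ofNat n : A)) = 0 := by
  rw [← Nat.cast_ofNat]
  exact D.map_natCast n

lemma MvPolynomial.degreeOf_eq_zero_iff {σ R : Type*} [CommSemiring R] {p : MvPolynomial σ R}
    {i : σ} : p.degreeOf i = 0 ↔ ∀ m ∈ p.support, m i = 0 := by
  simpa only [Nat.le_zero] using degreeOf_le_iff (n := i) (f := p) (d := 0)

lemma vec2_mem_convexHull_of_combo {s : Set (Fin 2 → ℝ)} {p₁ p₂ q₁ q₂ x y : ℝ} (θ : ℝ)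
    (hp : ![p₁, p₂] ∈ convexHull ℝ s) (hq : ![q₁, q₂] ∈ convexHull ℝ s)
    (h₀ : 0 ≤ θ) (h₁ : θ ≤ 1) (hx : x = (1 - θ) * p₁ + θ * q₁) (hy : y = (1 - θ) * p₂ + θ * q₂) :
    ![x, y] ∈ convexHull ℝ s := by
  convert convex_convexHull ℝ s hp hq (sub_nonneg.2 h₁) h₀ (sub_add_cancel 1 θ) using 1
  ext i
  fin_cases i <;> simp [hx, hy]

abbrev newtonPentagon : Set (Fin 2 → ℝ) := {![2, 0], ![5, 0], ![1, 4], ![0, 4], ![0, 1]}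

lemma mem_convexHull_newtonPentagon {x y : ℝ} (hx : 0 ≤ x) (hy : 0 ≤ y) (h₁ : 2 ≤ x + 2 * y)
    (h₂ : x + y ≤ 5) (h₃ : y ≤ 4) : ![x, y] ∈ convexHull ℝ newtonPentagon := by
  have vertex {p q : ℝ} (h : ![p, q] ∈ newtonPentagon) : ![p, q] ∈ convexHull ℝ newtonPentagon :=
    subset_convexHull ℝ _ h
  have right : ![5 - y, y] ∈ convexHull ℝ newtonPentagon :=
    vec2_mem_convexHull_of_combo (y / 4) (vertex (p := 5) (q := 0) (by simp))
      (vertex (p := 1) (q := 4) (by simp)) (by positivity) (by linarith) (by ring) (by ring)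
  obtain ⟨l, hl, hlx, hly⟩ : ∃ l, ![l, y] ∈ convexHull ℝ newtonPentagon ∧ l ≤ x ∧ l < 5 - y := by
    rcases le_total y 1 with hy1 | hy1
    · exact ⟨2 - 2 * y, vec2_mem_convexHull_of_combo y (vertex (p := 2) (q := 0) (by simp))
        (vertex (p := 0) (q := 1) (by simp)) hy hy1 (by ring) (by ring), by linarith, by linarith⟩
    · exact ⟨0, vec2_mem_convexHull_of_combo ((y - 1) / 3) (vertex (p := 0) (q := 1) (by simp))
        (vertex (p := 0) (q := 4) (by simp)) (by linarith) (by linarith) (by ring) (by ring),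
        hx, by linarith⟩
  have hlen : 0 < 5 - y - l := by linarith
  refine vec2_mem_convexHull_of_combo ((x - l) / (5 - y - l)) hl right
    (div_nonneg (by linarith) hlen.le) ((div_le_one hlen).2 (by linarith)) ?_ (by ring)
  field_simp
  ring

noncomputable def zwExponent (i j : ℕ) : Fin 3 →₀ ℕ := Finsupp.single 0 i + Finsupp.single 1 j

lemma monomial_zwExponent {R : Type*} [CommSemiring R] (i j : ℕ) (k : R) :
    monomial (zwExponent i j) k = C k * X 0 ^ i * X 1 ^ j := by
  simp [zwExponent, monomial_eq, Finsupp.prod_add_index, pow_add, mul_assoc]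

lemma zwExponent_inj {i j i' j' : ℕ} : zwExponent i j = zwExponent i' j' ↔ i = i' ∧ j = j' := by
  simp [zwExponent, Finsupp.ext_iff, Fin.forall_fin_succ, Finsupp.single_apply]

def IsNewtonPentagonExponent (m : Fin 3 →₀ ℕ) : Prop :=
  m 2 = 0 ∧ 2 ≤ m 0 + 2 * m 1 ∧ m 0 + m 1 ≤ 5 ∧ m 1 ≤ 4

lemma IsNewtonPentagonExponent.mem_convexHull {m : Fin 3 →₀ ℕ} (h : IsNewtonPentagonExponent m) :
    ![(m 0 : ℝ), (m 1 : ℝ)] ∈ convexHull ℝ newtonPentagon := by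
  obtain ⟨-, h₁, h₂, h₃⟩ := h
  exact mem_convexHull_newtonPentagon (Nat.cast_nonneg _) (Nat.cast_nonneg _)
    (by exact_mod_cast h₁) (by exact_mod_cast h₂) (by exact_mod_cast h₃)

noncomputable def ntildeCofactor (a b d : ℂ) : MvPolynomial (Fin 3) ℂ :=
  monomial (zwExponent 0 1) (b ^ 3) + monomial (zwExponent 0 2) (3 * b ^ 2) +
  monomial (zwExponent 0 3) (4 * b - b ^ 2) + monomial (zwExponent 0 4) (2 - b) +
  monomial (zwExponent 1 1) (4 * b ^ 2 * d) + monomial (zwExponent 1 2) (4 * b * d - b ^ 2 * d) +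
  monomial (zwExponent 1 3) (-10 * b * d) + monomial (zwExponent 1 4) (-9 * d) +
  monomial (zwExponent 2 0) (-3 * a * b ^ 2) +
  monomial (zwExponent 2 1) (7 * b * d ^ 2 - 9 * a * b ^ 2 - 24 * a * b) +
  monomial (zwExponent 2 2) (3 * d ^ 2 - 42 * a * b - 24 * a - b * d ^ 2) +
  monomial (zwExponent 2 3) (-36 * a - 9 * d ^ 2) +
  monomial (zwExponent 3 1) (-18 * a * b * d + 4 * d ^ 3 - 24 * a * d) +
  monomial (zwExponent 3 2) (-54 * a * d) +
  monomial (zwExponent 4 0) (3 * a * d ^ 2 - 9 * a ^ 2 * b - 18 * a ^ 2) +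
  monomial (zwExponent 4 1) (-9 * a * d ^ 2 - 36 * a ^ 2) +
  monomial (zwExponent 5 0) (-9 * a ^ 2 * d)

lemma ntilde_viro_eq (a b c d : ℂ) :
    Ntilde (C c * X 2 + X 0 * (X 1 * (X 1 + C b) + C d * X 0 * X 1 + C a * X 0 ^ 2)) =
      X 0 ^ 2 * ntildeCofactor a b d := by
  simp [Ntilde, ntildeCofactor, monomial_zwExponent, pderiv_X, map_ofNat]
  ring

lemma ntildeCofactor_mem_restrictSupport (a b d : ℂ) :
    ntildeCofactor a b d ∈ restrictSupport ℂ {m | IsNewtonPentagonExponent m} := by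
  unfold ntildeCofactor
  repeat' apply add_mem
  all_goals
    exact (monomial_mem_restrictSupport ℂ).2 (.inl (by simp [IsNewtonPentagonExponent, zwExponent]))

lemma coeff_w_ntildeCofactor (a b d : ℂ) :
    (ntildeCofactor a b d).coeff (Finsupp.single 1 1) = b ^ 3 := by
  rw [show Finsupp.single 1 1 = zwExponent 0 1 by simp [zwExponent]]
  simp [ntildeCofactor, coeff_monomial, zwExponent_inj]

lemma coeff_zsq_ntildeCofactor (a b d : ℂ) :
    (ntildeCofactor a b d).coeff (Finsupp.single 0 2) = -3 * a * b ^ 2 := by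
  rw [show Finsupp.single 0 2 = zwExponent 2 0 by simp [zwExponent]]
  simp [ntildeCofactor, coeff_monomial, zwExponent_inj]

theorem stmt13 (a b c d : ℂ) :
    let f : MvPolynomial (Fin 3) ℂ :=
      C c * X 2 + X 0 * (X 1 * (X 1 + C b) + C d * X 0 * X 1 + C a * X 0 ^ 2)
    (∀ mo ∈ (Ntilde f).support, mo 2 = 0) ∧
      ∃ M : MvPolynomial (Fin 3) ℂ,
        Ntilde f = X 0 ^ 2 * M ∧
        (∀ mo ∈ M.support, mo 2 = 0) ∧
        (∀ mo ∈ M.support,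
          (![(mo 0 : ℝ), (mo 1 : ℝ)] : Fin 2 → ℝ) ∈
            convexHull ℝ
              ({![2, 0], ![5, 0], ![1, 4], ![0, 4], ![0, 1]} : Set (Fin 2 → ℝ))) ∧
        M.coeff (Finsupp.single 1 1) = b ^ 3 ∧
        M.coeff (Finsupp.single 0 2) = -3 * a * b ^ 2 := by
  intro f
  set M := ntildeCofactor a b d
  have hN : Ntilde f = X 0 ^ 2 * M := ntilde_viro_eq a b c d
  have hM : ∀ mo ∈ M.support, IsNewtonPentagonExponent mo :=
    fun mo h => ntildeCofactor_mem_restrictSupport a b d h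
  have hMt : ∀ mo ∈ M.support, mo 2 = 0 := fun mo h => (hM mo h).1
  refine ⟨?_, M, hN, hMt, fun mo h => (hM mo h).mem_convexHull,
    coeff_w_ntildeCofactor a b d, coeff_zsq_ntildeCofactor a b d⟩
  rw [hN, ← degreeOf_eq_zero_iff]
  have hX : (X 0 ^ 2 : MvPolynomial (Fin 3) ℂ).degreeOf 2 = 0 := degreeOf_X_pow_of_ne _ (by decide)
  have := degreeOf_mul_le 2 (X 0 ^ 2) M
  rw [hX, degreeOf_eq_zero_iff.2 hMt] at this
  omega
end

section
/- Let a, b, c, d ∈ ℂ with b ≠ 0, and let f̃(z,w,t) = c·t + z·(w(w+b) + dzw + az²) ∈ ℂ[z,w,t]. Let z, w, t be analytic functions on a neighborhood of 0 ∈ ℂ with z(s) = α·s + o(s), w(s) = β·s² + o(s²), and t(s) = s³ + o(s³) for some α, β ∈ ℂ∖{0}, such that f̃(z(s), w(s), t(s)) = 0 and Ñ(z(s), w(s), t(s)) = 0 identically near 0. Then the leading coefficients satisfy the two equations b³·β = 3ab²·α² and a·α³ + b·α·β + c = 0; in particular β = 3aα²/b. -/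
open MvPolynomial Asymptotics Filter Topology

/-!
Substitute `z = Z s`, `w = W s²`, `t = T s³` (the weights of the tropism `(1,2,3)`). Then
`f̃ = s³ · F(Z,W,T,s)` and `Ñ = s⁴ · N(Z,W,s)` with polynomial `F`, `N`, and along the curve
`(Z,W,T) = (z/s, w/s², t/s³) → (α,β,1)` as `s → 0`. Since `F` and `N` vanish for `s ≠ 0`, by
continuity `F(α,β,1,0) = aα³ + bαβ + c` and `N(α,β,0) = α²b²(bβ − 3aα²)` vanish.
-/

theorem tendsto_div_pow_of_isLittleO {𝕜 : Type*} [NormedField 𝕜] {f : 𝕜 → 𝕜} {α : 𝕜} {n : ℕ}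
    (h : (fun s => f s - α * s ^ n) =o[𝓝 0] fun s => s ^ n) :
    Tendsto (fun s => f s / s ^ n) (𝓝[≠] 0) (𝓝 α) := by
  have hlim : Tendsto (fun s => (f s - α * s ^ n) / s ^ n + α) (𝓝[≠] 0) (𝓝 (0 + α)) :=
    (h.tendsto_div_nhds_zero.mono_left nhdsWithin_le_nhds).add tendsto_const_nhds
  rw [zero_add] at hlim
  refine hlim.congr' (eventually_mem_nhdsWithin.mono fun s (hs : s ≠ 0) => ?_)
  rw [sub_div, mul_div_cancel_right₀ _ (pow_ne_zero n hs), sub_add_cancel]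

@[simp]
theorem pderiv_ofNat {σ R : Type*} [CommSemiring R] (i : σ) (n : ℕ) [n.AtLeastTwo] :
    pderiv i (no_index (OfNat.ofNat n : MvPolynomial σ R)) = 0 := by
  rw [← Nat.cast_ofNat]
  exact (pderiv i).map_natCast n

section Rescaling

variable (a b c d : ℂ)

noncomputable def fTilde : MvPolynomial (Fin 3) ℂ :=
  C c * X 2 + X 0 * (X 1 * (X 1 + C b) + C d * X 0 * X 1 + C a * X 0 ^ 2)

def fScaled (Z W T s : ℂ) : ℂ :=
  c * T + a * Z ^ 3 + b * Z * W + s * Z * W * (d * Z + W * s)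

/-- `A`, `B`, `Γw`, `Γz` are `∂_z f̃ / s²`, `∂_w f̃ / (Z s)`, `Γ̃_w / (Z² s²)` and
`Γ̃_z / (Z s³)` after the substitution. -/
def nScaled (Z W s : ℂ) : ℂ :=
  let A := b * W + 3 * a * Z ^ 2 + s * W * (2 * d * Z + W * s)
  let B := b + s * (d * Z + 2 * W * s)
  let Γw := (b + 2 * d * Z * s + 2 * W * s ^ 2) * (1 + W * s ^ 2) * B -
    s ^ 2 * A * (b + 2 + 4 * W * s ^ 2 + d * Z * s)
  let Γz := (1 + W * s ^ 2) * ((b * W + 9 * a * Z ^ 2 + 4 * d * Z * W * s + W ^ 2 * s ^ 2) * B -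
    A * (b + 2 * d * Z * s + 2 * W * s ^ 2))
  Z ^ 2 * (A * Γw - B * Γz)

theorem eval_fTilde {s : ℂ} (hs : s ≠ 0) (x y r : ℂ) :
    eval ![x, y, r] (fTilde a b c d) = s ^ 3 * fScaled a b c d (x / s) (y / s ^ 2) (r / s ^ 3) s := by
  simp only [fTilde, fScaled, map_add, map_mul, map_pow, eval_C, eval_X, Matrix.cons_val,
    Matrix.cons_val_zero, Matrix.cons_val_one]
  field_simp
  ring

theorem eval_Ntilde_fTilde {s : ℂ} (hs : s ≠ 0) (x y r : ℂ) :
    eval ![x, y, r] (Ntilde (fTilde a b c d)) = s ^ 4 * nScaled a b d (x / s) (y / s ^ 2) s := by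
  simp only [Ntilde, fTilde, nScaled, map_add, map_sub, map_mul, map_pow, map_one,
    Derivation.leibniz, Derivation.leibniz_pow, Derivation.map_one_eq_zero, derivation_C, pderiv_X,
    pderiv_ofNat, Pi.single_eq_same, Pi.single_eq_of_ne, ne_eq, Fin.reduceEq, not_false_eq_true,
    one_ne_zero, zero_ne_one, smul_eq_mul, nsmul_eq_mul, Nat.cast_ofNat, Nat.add_one_sub_one,
    pow_one, mul_zero, mul_one, add_zero, zero_add, eval_X, eval_C, eval_ofNat, Matrix.cons_val_zero,
    Matrix.cons_val_one]
  field_simp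
  ring

theorem continuous_fScaled :
    Continuous fun p : ℂ × ℂ × ℂ × ℂ => fScaled a b c d p.1 p.2.1 p.2.2.1 p.2.2.2 := by
  unfold fScaled; fun_prop

theorem continuous_nScaled :
    Continuous fun p : ℂ × ℂ × ℂ × ℂ => nScaled a b d p.1 p.2.1 p.2.2.2 := by
  unfold nScaled; fun_prop

theorem fScaled_zero (α β : ℂ) : fScaled a b c d α β 1 0 = a * α ^ 3 + b * α * β + c := by
  simp [fScaled]; ring

theorem nScaled_zero (α β : ℂ) : nScaled a b d α β 0 = α ^ 2 * b ^ 2 * (b * β - 3 * a * α ^ 2) := by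
  simp [nScaled]; ring

end Rescaling

theorem stmt14_general (a b c d : ℂ) (hb : b ≠ 0)
    (z w t : ℂ → ℂ) (α β : ℂ) (hα : α ≠ 0)
    (hz1 : (fun s : ℂ => z s - α * s) =o[nhds 0] fun s : ℂ => s)
    (hw1 : (fun s : ℂ => w s - β * s ^ 2) =o[nhds 0] fun s : ℂ => s ^ 2)
    (ht1 : (fun s : ℂ => t s - s ^ 3) =o[nhds 0] fun s : ℂ => s ^ 3)
    (hzero : ∀ᶠ s in nhds (0 : ℂ),
      eval ![z s, w s, t s]
          (C c * X 2 + X 0 * (X 1 * (X 1 + C b) + C d * X 0 * X 1 + C a * X 0 ^ 2)) = 0 ∧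
        eval ![z s, w s, t s]
          (Ntilde (C c * X 2 + X 0 * (X 1 * (X 1 + C b) + C d * X 0 * X 1 + C a * X 0 ^ 2)))
          = 0) :
    b ^ 3 * β = 3 * a * b ^ 2 * α ^ 2 ∧
      a * α ^ 3 + b * α * β + c = 0 ∧
      β = 3 * a * α ^ 2 / b := by
  have hZ : Tendsto (fun s => z s / s) (𝓝[≠] 0) (𝓝 α) := by
    simpa using tendsto_div_pow_of_isLittleO (n := 1) (by simpa using hz1)
  have hT : Tendsto (fun s => t s / s ^ 3) (𝓝[≠] 0) (𝓝 1) :=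
    tendsto_div_pow_of_isLittleO (by simpa using ht1)
  have hu : Tendsto (fun s => (z s / s, w s / s ^ 2, t s / s ^ 3, s)) (𝓝[≠] 0)
      (𝓝 (α, β, 1, 0)) :=
    hZ.prodMk_nhds <| (tendsto_div_pow_of_isLittleO hw1).prodMk_nhds <|
      hT.prodMk_nhds <| tendsto_nhdsWithin_of_tendsto_nhds tendsto_id
  have hzero' : ∀ᶠ s in 𝓝 0, eval ![z s, w s, t s] (fTilde a b c d) = 0 ∧
      eval ![z s, w s, t s] (Ntilde (fTilde a b c d)) = 0 := hzero
  have hscaled : ∀ᶠ s in 𝓝[≠] 0, (z s / s, w s / s ^ 2, t s / s ^ 3, s) ∈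
      {p : ℂ × ℂ × ℂ × ℂ | fScaled a b c d p.1 p.2.1 p.2.2.1 p.2.2.2 = 0} ∩
      {p | nScaled a b d p.1 p.2.1 p.2.2.2 = 0} := by
    filter_upwards [nhdsWithin_le_nhds hzero', eventually_mem_nhdsWithin] with s ⟨hf, hN⟩ hs
    rw [eval_fTilde a b c d hs] at hf
    rw [eval_Ntilde_fTilde a b c d hs] at hN
    exact ⟨(mul_eq_zero.mp hf).resolve_left (pow_ne_zero 3 hs),
      (mul_eq_zero.mp hN).resolve_left (pow_ne_zero 4 hs)⟩
  obtain ⟨hF0, hN0⟩ : fScaled a b c d α β 1 0 = 0 ∧ nScaled a b d α β 0 = 0 :=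
    ((isClosed_eq (continuous_fScaled a b c d) continuous_const).inter
      (isClosed_eq (continuous_nScaled a b d) continuous_const)).mem_of_tendsto hu hscaled
  rw [fScaled_zero] at hF0
  rw [nScaled_zero] at hN0
  have hβα : b * β - 3 * a * α ^ 2 = 0 :=
    (mul_eq_zero.mp hN0).resolve_left (mul_ne_zero (pow_ne_zero 2 hα) (pow_ne_zero 2 hb))
  refine ⟨by linear_combination b ^ 2 * hβα, hF0, ?_⟩
  field_simp
  linear_combination hβα

theorem stmt14 (a b c d : ℂ) (hb : b ≠ 0)
    (z w t : ℂ → ℂ) (α β : ℂ) (hα : α ≠ 0) (hβ : β ≠ 0)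
    (hz : AnalyticAt ℂ z 0) (hw : AnalyticAt ℂ w 0) (ht : AnalyticAt ℂ t 0)
    (hz1 : (fun s : ℂ => z s - α * s) =o[nhds 0] fun s : ℂ => s)
    (hw1 : (fun s : ℂ => w s - β * s ^ 2) =o[nhds 0] fun s : ℂ => s ^ 2)
    (ht1 : (fun s : ℂ => t s - s ^ 3) =o[nhds 0] fun s : ℂ => s ^ 3)
    (hzero : ∀ᶠ s in nhds (0 : ℂ),
      eval ![z s, w s, t s]
          (C c * X 2 + X 0 * (X 1 * (X 1 + C b) + C d * X 0 * X 1 + C a * X 0 ^ 2)) = 0 ∧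
        eval ![z s, w s, t s]
          (Ntilde (C c * X 2 + X 0 * (X 1 * (X 1 + C b) + C d * X 0 * X 1 + C a * X 0 ^ 2)))
          = 0) :
    b ^ 3 * β = 3 * a * b ^ 2 * α ^ 2 ∧
      a * α ^ 3 + b * α * β + c = 0 ∧
      β = 3 * a * α ^ 2 / b :=
  stmt14_general a b c d hb z w t α β hα hz1 hw1 ht1 hzero
end
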